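/- arXiv:1804.10187 — 5 statements merged into one kernel-verified Lean document; each statement's English description precedes it below -/
import Mathlib

section
/- Let J be a real n×n matrix all of whose eigenvalues have modulus strictly less than 1, let â, r̂ ∈ ℝⁿ, and assume the second moment m₂ := ∫₀^∞ τ² f(τ)dτ is finite. Then the recursion m_s = J·(m₁·â) + J·m_{s−1} + r̂ converges for every initial vector, and the steady-state mean ∫₀^∞ p(τ)·[lim_{s→∞} m_s + τ·â] dτ equals (Iₙ − J)⁻¹·(J·m₁·â + r̂) + (m₂/(2m₁))·â; in particular it depends on f only through its first two moments m₁ and m₂. (Corollary 3.3: the case A = 0.) -/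
open MeasureTheory Matrix Filter
open scoped ENNReal NNReal

attribute [local instance] Matrix.linftyOpNormedAddCommGroup Matrix.linftyOpNormedRing
  Matrix.linftyOpNormedAlgebra Matrix.linftyOpNormedSpace

/-- All complex eigenvalues of the real matrix `X` have modulus strictly less than one. -/
def specLt1 {m : Type*} [Fintype m] [DecidableEq m] (X : Matrix m m ℝ) : Prop :=
  ∀ μ ∈ spectrum ℂ (X.map (algebraMap ℝ ℂ)), ‖μ‖ < 1

private lemma aux_norm_map {N : ℕ} (M : Matrix (Fin N) (Fin N) ℝ) :
    ‖M.map (algebraMap ℝ ℂ)‖ = ‖M‖ := by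
  rw [Matrix.linfty_opNorm_def, Matrix.linfty_opNorm_def]
  congr 1
  refine Finset.sup_congr rfl fun i _ => Finset.sum_congr rfl fun j _ => ?_
  simp [Matrix.map_apply]

private lemma aux_pow_norm_tendsto {N : ℕ} [Nonempty (Fin N)] (J : Matrix (Fin N) (Fin N) ℝ)
    (hJ : specLt1 J) : Tendsto (fun k : ℕ => ‖J ^ k‖) atTop (nhds 0) := by
  set Jc := J.map (algebraMap ℝ ℂ) with hJc
  have hcpow : Tendsto (fun k : ℕ => ‖Jc ^ k‖) atTop (nhds 0) := by
    have hρ : spectralRadius ℂ Jc < 1 := by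
      have := spectrum.spectralRadius_lt_of_forall_lt Jc (r := 1)
        (fun z hz => by simpa [← NNReal.coe_lt_coe] using hJ z hz)
      simpa using this
    obtain ⟨r, hr0, hr1⟩ := ENNReal.lt_iff_exists_nnreal_btwn.mp hρ
    have hgel := spectrum.pow_nnnorm_pow_one_div_tendsto_nhds_spectralRadius Jc
    have hev : ∀ᶠ k : ℕ in atTop, (‖Jc ^ k‖₊ : ℝ≥0∞) ^ (1/(k:ℝ)) < r :=
      hgel.eventually_lt_const hr0
    have hbound : ∀ᶠ k : ℕ in atTop, ‖Jc ^ k‖ ≤ (r:ℝ) ^ k := by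
      filter_upwards [hev, eventually_ge_atTop 1] with k hk hk1
      have hk0 : (1/(k:ℝ)) * k = 1 := by field_simp
      have h2 : (‖Jc ^ k‖₊ : ℝ≥0∞) ≤ (r : ℝ≥0∞) ^ (k:ℝ) := by
        calc (‖Jc ^ k‖₊ : ℝ≥0∞) = ((‖Jc ^ k‖₊ : ℝ≥0∞) ^ (1/(k:ℝ))) ^ (k:ℝ) := by
              rw [← ENNReal.rpow_mul, hk0, ENNReal.rpow_one]
          _ ≤ (r : ℝ≥0∞) ^ (k:ℝ) := ENNReal.rpow_le_rpow hk.le (by positivity)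
      rw [ENNReal.rpow_natCast] at h2
      have h4 : ‖Jc ^ k‖₊ ≤ r ^ k := by exact_mod_cast h2
      exact_mod_cast h4
    refine squeeze_zero' (Eventually.of_forall fun k => norm_nonneg _) hbound ?_
    exact tendsto_pow_atTop_nhds_zero_of_lt_one r.coe_nonneg (by exact_mod_cast hr1)
  refine hcpow.congr fun k => ?_
  rw [hJc, show (J.map (algebraMap ℝ ℂ)) ^ k = (J ^ k).map (algebraMap ℝ ℂ) from by
    simpa using (map_pow ((algebraMap ℝ ℂ).mapMatrix) J k).symm, aux_norm_map]

private lemma aux_tendsto_rec {N : ℕ} [Nonempty (Fin N)] (J : Matrix (Fin N) (Fin N) ℝ)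
    (hJ : specLt1 J) (c L : Fin N → ℝ) (hL : L = J.mulVec L + c)
    (m : ℕ → Fin N → ℝ) (hm : ∀ s, m (s + 1) = J.mulVec (m s) + c) :
    Tendsto m atTop (nhds L) := by
  have hnorm := aux_pow_norm_tendsto J hJ
  have hind : ∀ s, m s - L = (J ^ s).mulVec (m 0 - L) := by
    intro s
    induction s with
    | zero => simp [Matrix.one_mulVec]
    | succ s ih =>
      have step : m (s+1) - L = J.mulVec (m s - L) := by
        rw [hm s]
        nth_rewrite 1 [hL]
        rw [Matrix.mulVec_sub]
        abel
      rw [step, ih, Matrix.mulVec_mulVec, ← pow_succ']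
  rw [← tendsto_sub_nhds_zero_iff]
  rw [tendsto_zero_iff_norm_tendsto_zero]
  refine squeeze_zero (g := fun s => ‖J ^ s‖ * ‖m 0 - L‖) (fun s => norm_nonneg _)
    (fun s => ?_) (by simpa using hnorm.mul_const ‖m 0 - L‖)
  rw [hind s]
  exact Matrix.linfty_opNorm_mulVec _ _

private lemma aux_split (g : ℝ → ℝ) (hg : IntegrableOn g (Set.Ioi 0)) (T : ℝ) (hT : 0 ≤ T) :
    ∫ y in Set.Ioi T, g y = (∫ y in Set.Ioi 0, g y) - ∫ y in (0:ℝ)..T, g y := by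
  rw [intervalIntegral.integral_of_le hT]
  have hdisj : Disjoint (Set.Ioc 0 T) (Set.Ioi T) := Set.Ioc_disjoint_Ioi le_rfl
  have hunion := Set.Ioc_union_Ioi_eq_Ioi hT (a := (0:ℝ))
  have := MeasureTheory.setIntegral_union hdisj measurableSet_Ioi
    (hg.mono_set (by rw [← hunion]; exact Set.subset_union_left))
    (hg.mono_set (by rw [← hunion]; exact Set.subset_union_right))
  rw [hunion] at this
  rw [this]; ring

private lemma aux_moment (f : ℝ → ℝ) (hf_cont : Continuous f) (hf_nonneg : ∀ y, 0 ≤ f y)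
    (hf_int : IntegrableOn f (Set.Ioi 0)) (hf_prob : ∫ τ in Set.Ioi (0:ℝ), f τ = 1)
    (S : ℝ → ℝ) (hS : ∀ τ : ℝ, S τ = 1 - ∫ y in (0:ℝ)..τ, f y)
    (w W : ℝ → ℝ) (hw_cont : Continuous w) (hW : ∀ x, HasDerivAt W (w x) x)
    (hW0 : W 0 = 0) (hW_nonneg : ∀ x, 0 ≤ x → 0 ≤ W x)
    (hW_mono : ∀ x y, 0 ≤ x → x ≤ y → W x ≤ W y)
    (hw_nonneg : ∀ x, 0 ≤ x → 0 ≤ w x)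
    (hWf_int : IntegrableOn (fun y => W y * f y) (Set.Ioi 0)) :
    IntegrableOn (fun τ => S τ * w τ) (Set.Ioi 0) ∧
      (∫ τ in Set.Ioi (0:ℝ), S τ * w τ) = ∫ y in Set.Ioi (0:ℝ), W y * f y := by
  have hSfun : S = fun t => 1 - ∫ y in (0:ℝ)..t, f y := funext hS
  subst hSfun
  set S : ℝ → ℝ := fun t => 1 - ∫ y in (0:ℝ)..t, f y with hSdef
  have hS_deriv : ∀ x, HasDerivAt S (-(f x)) x := fun x =>
    (hasDerivAt_const x (1:ℝ)).sub ((hf_cont.integral_hasStrictDerivAt 0 x).hasDerivAt)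
      |>.congr_deriv (by ring)
  have hS_cont : Continuous S := by
    rw [continuous_iff_continuousAt]
    exact fun x => (hS_deriv x).continuousAt
  have hS_tail : ∀ T, 0 ≤ T → S T = ∫ y in Set.Ioi T, f y := by
    intro T hT
    rw [aux_split f hf_int T hT, hf_prob, hSdef]
  have hS_nonneg : ∀ T, 0 ≤ T → 0 ≤ S T := by
    intro T hT
    rw [hS_tail T hT]
    exact setIntegral_nonneg measurableSet_Ioi fun y _ => hf_nonneg y
  have hIBP : ∀ T, 0 ≤ T →
      (∫ x in (0:ℝ)..T, S x * w x) = S T * W T + ∫ x in (0:ℝ)..T, W x * f x := by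
    intro T hT
    have h := intervalIntegral.integral_mul_deriv_eq_deriv_mul_of_hasDerivAt
      (u := S) (v := W) (u' := fun x => -(f x)) (v' := w) (a := 0) (b := T)
      (hS_cont.continuousOn)
      ((continuous_iff_continuousAt.mpr fun x => (hW x).continuousAt).continuousOn)
      (fun x _ => hS_deriv x) (fun x _ => hW x)
      ((hf_cont.neg).intervalIntegrable 0 T) (hw_cont.intervalIntegrable 0 T)
    rw [h, hW0]
    have : (∫ x in (0:ℝ)..T, -(f x) * W x) = -∫ x in (0:ℝ)..T, W x * f x := by
      rw [← intervalIntegral.integral_neg]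
      congr 1; ext x; ring
    rw [this]; ring
  set A := ∫ y in Set.Ioi (0:ℝ), W y * f y with hA
  have hWfT : Tendsto (fun T : ℝ => ∫ x in (0:ℝ)..T, W x * f x) atTop (nhds A) :=
    MeasureTheory.intervalIntegral_tendsto_integral_Ioi 0 hWf_int tendsto_id
  have htail : Tendsto (fun T : ℝ => ∫ y in Set.Ioi T, W y * f y) atTop (nhds 0) := by
    have h1 : Tendsto (fun T : ℝ => A - ∫ x in (0:ℝ)..T, W x * f x) atTop (nhds (A - A)) :=
      tendsto_const_nhds.sub hWfT
    rw [sub_self] at h1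
    refine h1.congr' ?_
    filter_upwards [eventually_ge_atTop (0:ℝ)] with T hT
    rw [aux_split _ hWf_int T hT]
  have hSW_le : ∀ T : ℝ, 0 < T → S T * W T ≤ ∫ y in Set.Ioi T, W y * f y := by
    intro T hT
    rw [hS_tail T hT.le, ← MeasureTheory.integral_mul_const]
    refine setIntegral_mono_on ((hf_int.mono_set (Set.Ioi_subset_Ioi hT.le)).mul_const _)
      (hWf_int.mono_set (Set.Ioi_subset_Ioi hT.le)) measurableSet_Ioi ?_
    intro y hy
    have hy' : T ≤ y := (Set.mem_Ioi.mp hy).le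
    calc f y * W T ≤ f y * W y :=
          mul_le_mul_of_nonneg_left (hW_mono T y hT.le hy') (hf_nonneg y)
      _ = W y * f y := mul_comm _ _
  have hSW_tendsto : Tendsto (fun T : ℝ => S T * W T) atTop (nhds 0) := by
    apply squeeze_zero' ?_ ?_ htail
    · filter_upwards [eventually_ge_atTop (0:ℝ)] with T hT
      exact mul_nonneg (hS_nonneg T hT) (hW_nonneg T hT)
    · filter_upwards [eventually_gt_atTop (0:ℝ)] with T hT
      exact hSW_le T hT
  have hmain : Tendsto (fun T : ℝ => ∫ x in (0:ℝ)..T, S x * w x) atTop (nhds A) := by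
    have := hSW_tendsto.add hWfT
    rw [zero_add] at this
    refine this.congr' ?_
    filter_upwards [eventually_ge_atTop (0:ℝ)] with T hT
    exact (hIBP T hT).symm
  have hint : IntegrableOn (fun τ => S τ * w τ) (Set.Ioi 0) := by
    refine MeasureTheory.integrableOn_Ioi_of_intervalIntegral_norm_tendsto A 0
      (fun T => ((hS_cont.mul hw_cont).integrableOn_Ioc)) tendsto_id ?_
    refine hmain.congr' ?_
    filter_upwards [eventually_ge_atTop (0:ℝ)] with T hT
    simp only [id_eq]
    rw [intervalIntegral.integral_of_le hT, intervalIntegral.integral_of_le hT]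
    refine setIntegral_congr_fun measurableSet_Ioc fun x hx => ?_
    rw [Real.norm_eq_abs, abs_of_nonneg (mul_nonneg (hS_nonneg x hx.1.le) (hw_nonneg x hx.1.le))]
  exact ⟨hint, tendsto_nhds_unique
    (MeasureTheory.intervalIntegral_tendsto_integral_Ioi 0 hint tendsto_id) hmain⟩

/-- **Corollary 3.3 (the case `A = 0`).** -/
theorem ttshs_steady_state_mean_A_eq_zero
    (n : ℕ) (J : Matrix (Fin n) (Fin n) ℝ) (a r : Fin n → ℝ)
    (hJ : specLt1 J)
    (f : ℝ → ℝ) (hf_cont : Continuous f)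
    (hf_pos : ∀ τ : ℝ, 0 < τ → 0 < f τ) (hf_supp : ∀ τ : ℝ, τ ≤ 0 → f τ = 0)
    (hf_prob : ∫ τ in Set.Ioi (0:ℝ), f τ = 1)
    (S : ℝ → ℝ) (hS : ∀ τ : ℝ, S τ = 1 - ∫ y in (0:ℝ)..τ, f y)
    (m₁ : ℝ) (hm₁ : m₁ = ∫ τ in Set.Ioi (0:ℝ), τ * f τ)
    (hm₁_int : IntegrableOn (fun τ : ℝ => τ * f τ) (Set.Ioi 0))
    (m₂ : ℝ) (hm₂ : m₂ = ∫ τ in Set.Ioi (0:ℝ), τ ^ 2 * f τ)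
    (hm₂_int : IntegrableOn (fun τ : ℝ => τ ^ 2 * f τ) (Set.Ioi 0))
    (p : ℝ → ℝ) (hp : ∀ τ : ℝ, p τ = S τ / m₁) :
    ∀ m : ℕ → Fin n → ℝ,
      (∀ s : ℕ, m (s + 1) = J.mulVec (m₁ • a) + J.mulVec (m s) + r) →
      ∃ L : Fin n → ℝ, Tendsto m atTop (nhds L) ∧
        (∫ τ in Set.Ioi (0:ℝ), p τ • (L + τ • a)) =
          (1 - J)⁻¹.mulVec (J.mulVec (m₁ • a) + r) + (m₂ / (2 * m₁)) • a := by
  intro m hm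
  rcases Nat.eq_zero_or_pos n with hn | hn
  · subst hn
    haveI : IsEmpty (Fin 0) := Fin.isEmpty
    haveI : Subsingleton (Fin 0 → ℝ) := ⟨fun x y => funext fun i => i.elim0⟩
    refine ⟨0, ?_, Subsingleton.elim _ _⟩
    have hmz : m = fun _ => 0 := funext fun s => Subsingleton.elim _ _
    rw [hmz]
    exact tendsto_const_nhds
  haveI : Nonempty (Fin n) := Fin.pos_iff_nonempty.mp hn
  -- basic facts about f
  have hf_nonneg : ∀ y : ℝ, 0 ≤ f y := fun y => by
    rcases lt_or_ge 0 y with h | h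
    · exact (hf_pos y h).le
    · rw [hf_supp y h]
  have hf_int : IntegrableOn f (Set.Ioi 0) := by
    by_contra h
    rw [MeasureTheory.integral_undef h] at hf_prob
    norm_num at hf_prob
  have hm₁_pos : 0 < m₁ := by
    have hae : 0 ≤ᵐ[volume.restrict (Set.Ioi (0:ℝ))] fun τ => τ * f τ := by
      filter_upwards [ae_restrict_mem measurableSet_Ioi] with τ hτ
      exact (mul_pos hτ (hf_pos τ hτ)).le
    have hsupp : Set.Ioi (0:ℝ) ⊆ Function.support (fun τ => τ * f τ) := fun τ hτ =>
      Function.mem_support.mpr (ne_of_gt (mul_pos hτ (hf_pos τ hτ)))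
    rw [hm₁, MeasureTheory.setIntegral_pos_iff_support_of_nonneg_ae hae hm₁_int]
    refine lt_of_lt_of_le ?_ (measure_mono (Set.subset_inter hsupp (subset_refl _)))
    simp [Real.volume_Ioi]
  have hm₁_ne : m₁ ≠ 0 := hm₁_pos.ne'
  -- the two moment computations
  have hM1 := aux_moment f hf_cont hf_nonneg hf_int hf_prob S hS
    (fun _ => 1) (fun x => x) continuous_const (fun x => hasDerivAt_id x) rfl
    (fun x hx => hx) (fun x y _ hxy => hxy) (fun _ _ => zero_le_one) hm₁_int
  have hS_int : IntegrableOn S (Set.Ioi 0) := by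
    have := hM1.1
    simpa using this
  have hS_val : (∫ τ in Set.Ioi (0:ℝ), S τ) = m₁ := by
    have := hM1.2
    simpa [hm₁] using this
  have hW2 : ∀ x : ℝ, HasDerivAt (fun t : ℝ => t ^ 2 / 2) x x := by
    intro x
    have := (hasDerivAt_pow 2 x).div_const 2
    norm_num at this
    exact this
  have hW2f_int : IntegrableOn (fun y : ℝ => y ^ 2 / 2 * f y) (Set.Ioi 0) := by
    have heq : (fun y : ℝ => y ^ 2 / 2 * f y) = fun y => (y ^ 2 * f y) / 2 :=
      funext fun y => by ring
    rw [heq]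
    exact hm₂_int.div_const 2
  have hM2 := aux_moment f hf_cont hf_nonneg hf_int hf_prob S hS
    (fun x => x) (fun x => x ^ 2 / 2) continuous_id hW2 (by norm_num)
    (fun x hx => by positivity)
    (fun x y hx hxy => by
      have := pow_le_pow_left₀ hx hxy 2
      linarith)
    (fun x hx => hx) hW2f_int
  have hτS_int : IntegrableOn (fun τ : ℝ => S τ * τ) (Set.Ioi 0) := hM2.1
  have hτS_val : (∫ τ in Set.Ioi (0:ℝ), S τ * τ) = m₂ / 2 := by
    have h2 := hM2.2
    have heq : (fun y : ℝ => y ^ 2 / 2 * f y) = fun y => (y ^ 2 * f y) / 2 :=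
      funext fun y => by ring
    rw [heq] at h2
    rw [h2, MeasureTheory.integral_div, ← hm₂]
  -- matrix part
  have h1spec : (1:ℂ) ∉ spectrum ℂ (J.map (algebraMap ℝ ℂ)) := by
    intro hmem
    have := hJ 1 hmem
    norm_num at this
  have hdet : IsUnit (1 - J).det := by
    rw [spectrum.mem_iff, not_not] at h1spec
    rw [_root_.map_one] at h1spec
    have hmap : (1 - J).map (algebraMap ℝ ℂ) = 1 - J.map (algebraMap ℝ ℂ) := by
      simpa using (map_sub ((algebraMap ℝ ℂ).mapMatrix) 1 J)
    rw [← hmap] at h1spec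
    have h2 : IsUnit ((1 - J).map (algebraMap ℝ ℂ)).det :=
      (Matrix.isUnit_iff_isUnit_det _).mp h1spec
    rw [← RingHom.mapMatrix_apply, ← RingHom.map_det] at h2
    exact isUnit_iff_ne_zero.mpr fun h => h2.ne_zero (by simp [h])
  set c : Fin n → ℝ := J.mulVec (m₁ • a) + r with hc
  set L : Fin n → ℝ := (1 - J)⁻¹.mulVec c with hLdef
  have hfix : L = J.mulVec L + c := by
    have hinv : (1 - J) * (1 - J)⁻¹ = 1 := Matrix.mul_nonsing_inv _ hdet
    have h1 : (1 - J).mulVec L = c := by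
      rw [hLdef, Matrix.mulVec_mulVec, hinv, Matrix.one_mulVec]
    have h2 : L - J.mulVec L = c := by
      rw [← h1, Matrix.sub_mulVec, Matrix.one_mulVec]
    exact (sub_eq_iff_eq_add.mp h2).trans (add_comm c _)
  have hconv : Tendsto m atTop (nhds L) := by
    refine aux_tendsto_rec J hJ c L hfix m fun s => ?_
    rw [hm s, hc]; abel
  refine ⟨L, hconv, ?_⟩
  -- compute the integral
  have heq1 : (fun τ : ℝ => p τ • (L + τ • a)) =
      fun τ : ℝ => (S τ / m₁) • L + (S τ * τ / m₁) • a := by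
    funext τ
    rw [hp τ, smul_add, smul_smul, div_mul_eq_mul_div]
  rw [heq1]
  rw [MeasureTheory.integral_add ((hS_int.div_const m₁).smul_const L)
    ((hτS_int.div_const m₁).smul_const a)]
  rw [integral_smul_const, integral_smul_const]
  rw [MeasureTheory.integral_div, MeasureTheory.integral_div, hS_val, hτS_val]
  rw [div_self hm₁_ne, one_smul, div_div]
end

section
/- Let A be a real symmetric negative definite n×n matrix, let J be a diagonal n×n matrix whose diagonal entries lie in (0,1), and let Q be a diagonal n×n matrix such that all diagonal entries of J⊗J + Q⊗Q lie in (0,1). Then for ANY continuous probability density f on (0,∞) (no moment conditions required): (a) M := ∫₀^∞ f(τ)·exp(τA)dτ exists, is symmetric positive definite with largest eigenvalue strictly less than 1, and every eigenvalue of J·M is real, positive, and strictly less than 1; (b) M₂ := ∫₀^∞ f(τ)·(exp(τA)⊗exp(τA))dτ exists and every eigenvalue of (J⊗J + Q⊗Q)·M₂ has modulus strictly less than 1. (Remark 1: existence of the first two steady-state moments irrespective of the inter-event distribution.) -/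
open MeasureTheory Matrix Filter NormedSpace Kronecker

attribute [local instance] Matrix.normedAddCommGroup Matrix.normedSpace

/-!
Write `A = V diag(λ) Vᵀ` with `V` orthogonal and `λ < 0`. Then `exp (τ A) = V diag(e^{τλ}) Vᵀ`,
so `M = V diag(m) Vᵀ` with `m i = ∫ f(τ) e^{τ λ i} dτ`, and `0 < m i < 1` only because
`0 < e^{τ λ i} < 1` for `τ > 0` and `f` is a probability density: no moment of `f` enters.
Likewise `exp (τ A) ⊗ exp (τ A) = exp (τ A₂)` with `A₂ = (V ⊗ V) diag(λ i + λ j) (V ⊗ V)ᵀ`,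
so `M₂` has the same shape. Hence `0 < M < 1` and `0 < M₂ < 1` in the Loewner order.
For diagonal `D` with entries in `(0, 1]`, `D M` is similar to the symmetric matrix
`S = D^{1/2} M D^{1/2}`, and `1 - S = (1 - D) + D^{1/2} (1 - M) D^{1/2}` is positive definite,
so the eigenvalues of `D M` are real and lie in `(0, 1)`. Take `D = J` and `D = J ⊗ J + Q ⊗ Q`.
-/

theorem MeasureTheory.setIntegral_pos_of_forall_pos {α : Type*} [MeasurableSpace α]
    {μ : Measure α} {s : Set α} (hs : MeasurableSet s) (hμs : μ s ≠ 0) {g : α → ℝ}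
    (hg : IntegrableOn g s μ) (hpos : ∀ x ∈ s, 0 < g x) : 0 < ∫ x in s, g x ∂μ := by
  refine (setIntegral_pos_iff_support_of_nonneg_ae
    (ae_restrict_of_forall_mem hs fun x hx => (hpos x hx).le) hg).2 ?_
  have hsupp : s ⊆ Function.support g := fun x hx => (hpos x hx).ne'
  rwa [Set.inter_eq_right.2 hsupp, pos_iff_ne_zero]

section Density

open Set

variable {μ : Measure ℝ} {f : ℝ → ℝ}

theorem integrableOn_Ioi_mul_exp_mul (hf : IntegrableOn f (Ioi 0) μ) {c : ℝ} (hc : c ≤ 0) :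
    IntegrableOn (fun τ => f τ * Real.exp (τ * c)) (Ioi 0) μ := by
  refine hf.mul_bdd (c := 1) (by fun_prop)
    (ae_restrict_of_forall_mem measurableSet_Ioi fun τ hτ => ?_)
  rw [Real.norm_of_nonneg (Real.exp_pos _).le, Real.exp_le_one_iff]
  exact mul_nonpos_of_nonneg_of_nonpos hτ.le hc

theorem setIntegral_Ioi_mul_exp_mul_mem_Ioo (hf_pos : ∀ τ, 0 < τ → 0 < f τ)
    (hf : IntegrableOn f (Ioi 0) μ) (hf_one : ∫ τ in Ioi 0, f τ ∂μ = 1) {c : ℝ} (hc : c < 0) :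
    ∫ τ in Ioi 0, f τ * Real.exp (τ * c) ∂μ ∈ Ioo 0 1 := by
  have hμ : μ (Ioi 0) ≠ 0 := fun h => by
    simp [Measure.restrict_eq_zero.2 h] at hf_one
  have hexp : ∀ τ ∈ Ioi (0 : ℝ), Real.exp (τ * c) < 1 := fun τ hτ =>
    Real.exp_lt_one_iff.2 (mul_neg_of_pos_of_neg hτ hc)
  have hint := integrableOn_Ioi_mul_exp_mul hf hc.le
  refine ⟨setIntegral_pos_of_forall_pos measurableSet_Ioi hμ hint fun τ hτ =>
    mul_pos (hf_pos τ hτ) (Real.exp_pos _), ?_⟩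
  have hgap : 0 < ∫ τ in Ioi 0, (f τ - f τ * Real.exp (τ * c)) ∂μ :=
    setIntegral_pos_of_forall_pos measurableSet_Ioi hμ (hf.sub hint) fun τ hτ => by
      nlinarith [hf_pos τ hτ, hexp τ hτ]
  rw [integral_sub hf hint, hf_one] at hgap
  linarith

end Density

namespace Matrix

variable {N : Type*} [Fintype N] [DecidableEq N]

-- Instance search does not derive this from the local instance `Matrix.normedAddCommGroup`.
noncomputable local instance : ContinuousENorm (Matrix N N ℝ) :=
  NormedAddCommGroup.toENormedAddCommMonoid.toContinuousENorm

theorem posDef_conj_diagonal_iff {V : Matrix N N ℝ} (hV : IsUnit V) {s : N → ℝ} :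
    (V * diagonal s * star V).PosDef ↔ ∀ i, 0 < s i :=
  hV.posDef_star_right_conjugate_iff.trans posDef_diagonal_iff

theorem one_sub_conj_diagonal {V : Matrix N N ℝ} (hV : V ∈ unitaryGroup N ℝ) (s : N → ℝ) :
    1 - V * diagonal s * star V = V * diagonal (fun i => 1 - s i) * star V := by
  rw [← diagonal_sub, diagonal_one, Matrix.mul_sub, Matrix.sub_mul, Matrix.mul_one, hV.2]

theorem posDef_one_sub_conj_diagonal_iff {V : Matrix N N ℝ} (hV : V ∈ unitaryGroup N ℝ)
    {s : N → ℝ} : (1 - V * diagonal s * star V).PosDef ↔ ∀ i, s i < 1 := by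
  rw [one_sub_conj_diagonal hV, posDef_conj_diagonal_iff (Unitary.isUnit_coe (U := ⟨V, hV⟩))]
  simp only [sub_pos]

theorem neg_of_dotProduct_conj_diagonal_neg {V : Matrix N N ℝ} (hV : V ∈ unitaryGroup N ℝ)
    {s : N → ℝ} (hneg : ∀ x : N → ℝ, x ≠ 0 → x ⬝ᵥ (V * diagonal s * star V) *ᵥ x < 0) (i : N) :
    s i < 0 := by
  have hpos : (V * diagonal (fun i => -s i) * star V).PosDef := by
    refine PosDef.of_dotProduct_mulVec_pos ?_ fun x hx => ?_
    · simpa [star_eq_conjTranspose] using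
        isHermitian_mul_mul_conjTranspose V (isHermitian_diagonal fun i => -s i)
    · rw [← diagonal_neg, Matrix.mul_neg, Matrix.neg_mul, neg_mulVec, dotProduct_neg, star_trivial]
      exact neg_pos.2 (hneg x hx)
  simpa using (posDef_conj_diagonal_iff (Unitary.isUnit_coe (U := ⟨V, hV⟩))).1 hpos i

theorem IsHermitian.exists_conj_diagonal {S : Matrix N N ℝ} (hS : S.IsHermitian) :
    ∃ V ∈ unitaryGroup N ℝ, ∃ s : N → ℝ, S = V * diagonal s * star V :=
  ⟨_, hS.eigenvectorUnitary.2, hS.eigenvalues, by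
    simpa [RCLike.ofReal_real_eq_id] using hS.spectral_theorem⟩

theorem spectrum_subset_Iio_of_posDef_one_sub {M : Matrix N N ℝ} (h1M : (1 - M).PosDef) :
    spectrum ℝ M ⊆ Set.Iio 1 := by
  intro r hr
  have h : 1 - r ∈ spectrum ℝ (1 - M) := by
    rw [← map_one (algebraMap ℝ (Matrix N N ℝ)), ← spectrum.singleton_sub_eq]
    exact Set.sub_mem_sub rfl hr
  rw [h1M.1.spectrum_real_eq_range_eigenvalues] at h
  obtain ⟨i, hi⟩ := h
  have := h1M.eigenvalues_pos i
  rw [Set.mem_Iio]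
  linarith

theorem spectrum_map_units_conj_diagonal (P : (Matrix N N ℝ)ˣ) (s : N → ℝ) :
    spectrum ℂ (((P : Matrix N N ℝ) * diagonal s * (↑P⁻¹ : Matrix N N ℝ)).map (algebraMap ℝ ℂ)) =
      Set.range fun i => (s i : ℂ) := by
  let φ : Matrix N N ℝ →* Matrix N N ℂ := (algebraMap ℝ ℂ).mapMatrix.toMonoidHom
  have h : ((P : Matrix N N ℝ) * diagonal s * (↑P⁻¹ : Matrix N N ℝ)).map (algebraMap ℝ ℂ) =
      (Units.map φ P : Matrix N N ℂ) * diagonal (fun i => (s i : ℂ)) *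
        (↑(Units.map φ P)⁻¹ : Matrix N N ℂ) := by
    simp only [φ, Units.coe_map, Units.coe_map_inv, Matrix.map_mul, diagonal_map (map_zero _)]
    rfl
  rw [h, spectrum.units_conjugate, spectrum_diagonal]

theorem spectrum_map_diagonal_mul_subset_Ioo {d : N → ℝ} (hd0 : ∀ i, 0 < d i)
    (hd1 : ∀ i, d i ≤ 1) {M : Matrix N N ℝ} (hM : M.PosDef) (h1M : (1 - M).PosDef) :
    spectrum ℂ ((diagonal d * M).map (algebraMap ℝ ℂ)) ⊆ (↑) '' Set.Ioo (0 : ℝ) 1 := by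
  set R : Matrix N N ℝ := diagonal fun i => √(d i)
  have hRR : R * R = diagonal d := by
    rw [diagonal_mul_diagonal]
    exact congrArg diagonal (funext fun i => Real.mul_self_sqrt (hd0 i).le)
  have hR : IsUnit R :=
    isUnit_diagonal.2 (Pi.isUnit_iff.2 fun i => (Real.sqrt_pos.2 (hd0 i)).ne'.isUnit)
  have hRstar : star R = R := by
    simp [R, star_eq_conjTranspose]
  have hS : (R * M * R).PosDef := by
    simpa [hRstar] using hR.posDef_star_right_conjugate_iff.2 hM
  have h1S : (1 - R * M * R).PosDef := by
    have hsplit : 1 - R * M * R = diagonal (fun i => 1 - d i) + R * (1 - M) * star R := by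
      rw [hRstar, ← diagonal_sub, diagonal_one, ← hRR]
      noncomm_ring
    rw [hsplit]
    exact PosDef.posSemidef_add (posSemidef_diagonal_iff.2 fun i => sub_nonneg.2 (hd1 i))
      (hR.posDef_star_right_conjugate_iff.2 h1M)
  obtain ⟨W, hW, s, hSW⟩ := hS.1.exists_conj_diagonal
  rw [hSW] at hS h1S
  have hs0 := (posDef_conj_diagonal_iff (Unitary.isUnit_coe (U := ⟨W, hW⟩))).1 hS
  have hs1 := (posDef_one_sub_conj_diagonal_iff hW).1 h1S
  let P : (Matrix N N ℝ)ˣ := hR.unit * Unitary.toUnits ⟨W, hW⟩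
  have hsim : diagonal d * M = P * diagonal s * (↑P⁻¹ : Matrix N N ℝ) := by
    have hRinv : R * (↑hR.unit⁻¹ : Matrix N N ℝ) = 1 := hR.mul_val_inv
    calc diagonal d * M = R * (R * M * R) * (↑hR.unit⁻¹ : Matrix N N ℝ) := by
          simp only [← hRR, Matrix.mul_assoc, hRinv, Matrix.mul_one]
      _ = P * diagonal s * (↑P⁻¹ : Matrix N N ℝ) := by
          rw [hSW]
          simp [P, Matrix.mul_assoc]
  rw [hsim, spectrum_map_units_conj_diagonal]
  rintro _ ⟨i, rfl⟩
  exact ⟨s i, ⟨hs0 i, hs1 i⟩, rfl⟩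

theorem exp_smul_conj_diagonal {V : Matrix N N ℝ} (hV : V ∈ unitaryGroup N ℝ) (s : N → ℝ)
    (τ : ℝ) : exp (τ • (V * diagonal s * star V)) =
      V * diagonal (fun i => Real.exp (τ * s i)) * star V := by
  let U := Unitary.toUnits (⟨V, hV⟩ : unitaryGroup N ℝ)
  have hconj : τ • (V * diagonal s * star V) = U * diagonal (τ • s) * (↑U⁻¹ : Matrix N N ℝ) := by
    simp [U, diagonal_smul]
  rw [hconj, exp_units_conj, exp_diagonal]
  simp [U, Pi.exp_def, Real.exp_eq_exp_ℝ]

theorem conj_diagonal_kronecker_conj_diagonal {M : Type*} [Fintype M] [DecidableEq M]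
    (V : Matrix N N ℝ) (W : Matrix M M ℝ) (a : N → ℝ) (b : M → ℝ) :
    (V * diagonal a * star V) ⊗ₖ (W * diagonal b * star W) =
      (V ⊗ₖ W) * diagonal (fun p => a p.1 * b p.2) * star (V ⊗ₖ W) := by
  rw [mul_kronecker_mul, mul_kronecker_mul, diagonal_kronecker_diagonal, star_eq_conjTranspose,
    star_eq_conjTranspose, star_eq_conjTranspose, conjTranspose_kronecker]

theorem exp_smul_conj_diagonal_kronecker {V : Matrix N N ℝ} (hV : V ∈ unitaryGroup N ℝ)
    (s : N → ℝ) (τ : ℝ) :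
    exp (τ • (V * diagonal s * star V)) ⊗ₖ exp (τ • (V * diagonal s * star V)) =
      exp (τ • ((V ⊗ₖ V) * diagonal (fun p => s p.1 + s p.2) * star (V ⊗ₖ V))) := by
  rw [exp_smul_conj_diagonal hV, exp_smul_conj_diagonal (kronecker_mem_unitary hV hV),
    conj_diagonal_kronecker_conj_diagonal]
  simp only [mul_add, Real.exp_add]

theorem smul_exp_smul_conj_diagonal {V : Matrix N N ℝ} (hV : V ∈ unitaryGroup N ℝ) (s : N → ℝ)
    (c τ : ℝ) : c • exp (τ • (V * diagonal s * star V)) =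
      V * diagonal (fun i => c * Real.exp (τ * s i)) * star V := by
  rw [exp_smul_conj_diagonal hV, ← Matrix.smul_mul, ← Matrix.mul_smul, ← diagonal_smul]
  rfl

section Integral

variable {α : Type*} [MeasurableSpace α] {μ : Measure α}


noncomputable def mulDiagonalMulCLM (V W : Matrix N N ℝ) : (N → ℝ) →L[ℝ] Matrix N N ℝ :=
  LinearMap.toContinuousLinearMap
    (LinearMap.mulRight ℝ W ∘ₗ LinearMap.mulLeft ℝ V ∘ₗ diagonalLinearMap N ℝ ℝ)

theorem integrable_mul_diagonal_mul (V W : Matrix N N ℝ) {g : α → N → ℝ}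
    (hg : ∀ i, Integrable (g · i) μ) : Integrable (fun a => V * diagonal (g a) * W) μ :=
  (mulDiagonalMulCLM V W).integrable_comp (Integrable.of_eval hg)

theorem integral_mul_diagonal_mul (V W : Matrix N N ℝ) {g : α → N → ℝ}
    (hg : ∀ i, Integrable (g · i) μ) :
    ∫ a, V * diagonal (g a) * W ∂μ = V * diagonal (fun i => ∫ a, g a i ∂μ) * W := by
  have h := (mulDiagonalMulCLM V W).integral_comp_comm (Integrable.of_eval hg)
  have hint : (∫ a, g a ∂μ) = fun i => ∫ a, g a i ∂μ := funext (eval_integral hg)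
  rw [hint] at h
  exact h

end Integral

section Moment

variable {μ : Measure ℝ} {f : ℝ → ℝ} {V : Matrix N N ℝ} {s : N → ℝ}

theorem integrableOn_smul_exp_smul_conj_diagonal (hf : IntegrableOn f (Set.Ioi 0) μ)
    (hV : V ∈ unitaryGroup N ℝ) (hs : ∀ i, s i ≤ 0) :
    IntegrableOn (fun τ => f τ • exp (τ • (V * diagonal s * star V))) (Set.Ioi 0) μ := by
  simp_rw [smul_exp_smul_conj_diagonal hV]
  exact integrable_mul_diagonal_mul _ _ fun i => integrableOn_Ioi_mul_exp_mul hf (hs i)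

theorem setIntegral_smul_exp_smul_conj_diagonal (hf : IntegrableOn f (Set.Ioi 0) μ)
    (hV : V ∈ unitaryGroup N ℝ) (hs : ∀ i, s i ≤ 0) :
    ∫ τ in Set.Ioi 0, f τ • exp (τ • (V * diagonal s * star V)) ∂μ =
      V * diagonal (fun i => ∫ τ in Set.Ioi 0, f τ * Real.exp (τ * s i) ∂μ) * star V := by
  simp_rw [smul_exp_smul_conj_diagonal hV]
  exact integral_mul_diagonal_mul _ _ fun i => integrableOn_Ioi_mul_exp_mul hf (hs i)

theorem posDef_setIntegral_smul_exp_smul_conj_diagonal (hf_pos : ∀ τ, 0 < τ → 0 < f τ)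
    (hf : IntegrableOn f (Set.Ioi 0) μ) (hf_one : ∫ τ in Set.Ioi 0, f τ ∂μ = 1)
    (hV : V ∈ unitaryGroup N ℝ) (hs : ∀ i, s i < 0) :
    (∫ τ in Set.Ioi 0, f τ • exp (τ • (V * diagonal s * star V)) ∂μ).PosDef ∧
      (1 - ∫ τ in Set.Ioi 0, f τ • exp (τ • (V * diagonal s * star V)) ∂μ).PosDef := by
  have hm i := setIntegral_Ioi_mul_exp_mul_mem_Ioo hf_pos hf hf_one (hs i)
  rw [setIntegral_smul_exp_smul_conj_diagonal hf hV fun i => (hs i).le]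
  exact ⟨(posDef_conj_diagonal_iff (Unitary.isUnit_coe (U := ⟨V, hV⟩))).2 fun i => (hm i).1,
    (posDef_one_sub_conj_diagonal_iff hV).2 fun i => (hm i).2⟩

end Moment

end Matrix

theorem ttshs_remark1_general
    (n : ℕ) (A J Q : Matrix (Fin n) (Fin n) ℝ)
    (hA_symm : A.IsSymm)
    (hA_negdef : ∀ x : Fin n → ℝ, x ≠ 0 → x ⬝ᵥ A.mulVec x < 0)
    (hJ_diag : ∀ i j : Fin n, i ≠ j → J i j = 0)
    (hJ_mem : ∀ i : Fin n, J i i ∈ Set.Ioo (0:ℝ) 1)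
    (hQ_diag : ∀ i j : Fin n, i ≠ j → Q i j = 0)
    (hJQ_mem : ∀ q : Fin n × Fin n, (J ⊗ₖ J + Q ⊗ₖ Q) q q ∈ Set.Ioo (0:ℝ) 1)
    (f : ℝ → ℝ)
    (hf_pos : ∀ τ : ℝ, 0 < τ → 0 < f τ)
    (hf_prob : ∫ τ in Set.Ioi (0:ℝ), f τ = 1) :
    -- (a) the first moment generating matrix
    (@IntegrableOn ℝ _ _ _ NormedAddCommGroup.toENormedAddCommMonoid.toContinuousENorm (fun τ : ℝ => f τ • NormedSpace.exp (τ • A)) (Set.Ioi 0) volume ∧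
      (∫ τ in Set.Ioi (0:ℝ), f τ • NormedSpace.exp (τ • A)).PosDef ∧
      (∀ μ ∈ spectrum ℝ (∫ τ in Set.Ioi (0:ℝ), f τ • NormedSpace.exp (τ • A)), μ < 1) ∧
      (∀ μ ∈ spectrum ℂ ((J * ∫ τ in Set.Ioi (0:ℝ), f τ • NormedSpace.exp (τ • A)).map (algebraMap ℝ ℂ)),
        μ.im = 0 ∧ 0 < μ.re ∧ μ.re < 1)) ∧
    -- (b) the second moment generating matrix
    (@IntegrableOn ℝ _ _ _ NormedAddCommGroup.toENormedAddCommMonoid.toContinuousENorm (fun τ : ℝ => f τ • (NormedSpace.exp (τ • A) ⊗ₖ NormedSpace.exp (τ • A))) (Set.Ioi 0) volume ∧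
      specLt1 ((J ⊗ₖ J + Q ⊗ₖ Q) *
        ∫ τ in Set.Ioi (0:ℝ), f τ • (NormedSpace.exp (τ • A) ⊗ₖ NormedSpace.exp (τ • A)))) := by
  have hf : IntegrableOn f (Set.Ioi 0) := Integrable.of_integral_ne_zero (by simp [hf_prob])
  obtain ⟨V, hV, lam, rfl⟩ := (isHermitian_iff_isSymm.2 hA_symm).exists_conj_diagonal
  have hlam := neg_of_dotProduct_conj_diagonal_neg hV hA_negdef
  have hlam₂ (p : Fin n × Fin n) : lam p.1 + lam p.2 < 0 := add_neg (hlam p.1) (hlam p.2)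
  have hV₂ := kronecker_mem_unitary hV hV
  simp_rw [exp_smul_conj_diagonal_kronecker hV]
  obtain ⟨hM, h1M⟩ := posDef_setIntegral_smul_exp_smul_conj_diagonal hf_pos hf hf_prob hV hlam
  obtain ⟨hM₂, h1M₂⟩ :=
    posDef_setIntegral_smul_exp_smul_conj_diagonal hf_pos hf hf_prob hV₂ hlam₂
  have hJ : IsDiag J := hJ_diag
  have hK : IsDiag (J ⊗ₖ J + Q ⊗ₖ Q) :=
    (hJ.kronecker hJ).add ((show IsDiag Q from hQ_diag).kronecker hQ_diag)
  refine ⟨⟨integrableOn_smul_exp_smul_conj_diagonal hf hV fun i => (hlam i).le, hM,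
    spectrum_subset_Iio_of_posDef_one_sub h1M, fun μ hμ => ?_⟩,
    integrableOn_smul_exp_smul_conj_diagonal hf hV₂ fun p => (hlam₂ p).le, fun μ hμ => ?_⟩
  · rw [← hJ.diagonal_diag] at hμ
    obtain ⟨r, hr, rfl⟩ := spectrum_map_diagonal_mul_subset_Ioo (d := J.diag)
      (fun i => (hJ_mem i).1) (fun i => (hJ_mem i).2.le) hM h1M hμ
    exact ⟨Complex.ofReal_im r, hr.1, hr.2⟩
  · rw [← hK.diagonal_diag] at hμ
    obtain ⟨r, hr, rfl⟩ := spectrum_map_diagonal_mul_subset_Ioo (d := (J ⊗ₖ J + Q ⊗ₖ Q).diag)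
      (fun p => (hJQ_mem p).1) (fun p => (hJQ_mem p).2.le) hM₂ h1M₂ hμ
    rw [Complex.norm_real, Real.norm_of_nonneg hr.1.le]
    exact hr.2

/-- **Remark 1: existence of the first two steady-state moments irrespective of the
inter-event time distribution.** -/
theorem ttshs_remark1
    (n : ℕ) (A J Q : Matrix (Fin n) (Fin n) ℝ)
    (hA_symm : A.IsSymm)
    (hA_negdef : ∀ x : Fin n → ℝ, x ≠ 0 → x ⬝ᵥ A.mulVec x < 0)
    (hJ_diag : ∀ i j : Fin n, i ≠ j → J i j = 0)
    (hJ_mem : ∀ i : Fin n, J i i ∈ Set.Ioo (0:ℝ) 1)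
    (hQ_diag : ∀ i j : Fin n, i ≠ j → Q i j = 0)
    (hJQ_mem : ∀ q : Fin n × Fin n, (J ⊗ₖ J + Q ⊗ₖ Q) q q ∈ Set.Ioo (0:ℝ) 1)
    (f : ℝ → ℝ) (hf_cont : Continuous f)
    (hf_pos : ∀ τ : ℝ, 0 < τ → 0 < f τ) (hf_supp : ∀ τ : ℝ, τ ≤ 0 → f τ = 0)
    (hf_prob : ∫ τ in Set.Ioi (0:ℝ), f τ = 1) :
    -- (a) the first moment generating matrix
    (@IntegrableOn ℝ _ _ _ NormedAddCommGroup.toENormedAddCommMonoid.toContinuousENorm (fun τ : ℝ => f τ • NormedSpace.exp (τ • A)) (Set.Ioi 0) volume ∧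
      (∫ τ in Set.Ioi (0:ℝ), f τ • NormedSpace.exp (τ • A)).PosDef ∧
      (∀ μ ∈ spectrum ℝ (∫ τ in Set.Ioi (0:ℝ), f τ • NormedSpace.exp (τ • A)), μ < 1) ∧
      (∀ μ ∈ spectrum ℂ ((J * ∫ τ in Set.Ioi (0:ℝ), f τ • NormedSpace.exp (τ • A)).map (algebraMap ℝ ℂ)),
        μ.im = 0 ∧ 0 < μ.re ∧ μ.re < 1)) ∧
    -- (b) the second moment generating matrix
    (@IntegrableOn ℝ _ _ _ NormedAddCommGroup.toENormedAddCommMonoid.toContinuousENorm (fun τ : ℝ => f τ • (NormedSpace.exp (τ • A) ⊗ₖ NormedSpace.exp (τ • A))) (Set.Ioi 0) volume ∧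
      specLt1 ((J ⊗ₖ J + Q ⊗ₖ Q) *
        ∫ τ in Set.Ioi (0:ℝ), f τ • (NormedSpace.exp (τ • A) ⊗ₖ NormedSpace.exp (τ • A)))) :=
  ttshs_remark1_general n A J Q hA_symm hA_negdef hJ_diag hJ_mem hQ_diag hJQ_mem f hf_pos hf_prob
end

section
/- Let k, γ > 0 and set φ(γ) := ∫₀^∞ f(τ)·e^{−γτ} dτ. Consider the scalar recursion m_s = (1/2)·[φ(γ)·m_{s−1} + (k/γ)·(1 − φ(γ))], modeling the mean gene-product level just after each cell division (synthesis rate k, degradation rate γ, perfect halving at division). Then m_s converges for every initial value m₀, and the steady-state mean x̄ := ∫₀^∞ p(τ)·[e^{−γτ}·lim_{s→∞} m_s + (k/γ)·(1 − e^{−γτ})] dτ equals k/γ − (k/(2γ²m₁))·(1 − φ(γ))/(1 − φ(γ)/2). (Equation (40): mean gene product level for random cell-cycle times.) -/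
open MeasureTheory Filter

/-!
The mean after division obeys an affine recursion contracting by `φ/2`, so it converges to
its fixed point `L`. Writing `p = S/m₁`, the steady-state mean is
`(k/γ) ∫ S / m₁ + (L - k/γ) ∫ S e^{-γτ} / m₁`, and both integrals follow by integration by
parts: `∫₀^∞ S = m₁`, because `T S(T) ≤ ∫_T^∞ τ f(τ) → 0`, and `∫₀^∞ S e^{-γτ} = (1 - φ)/γ`.
-/

open Set Topology

theorem tendsto_of_affine_recursion {a b : ℝ} (ha : |a| < 1) {m : ℕ → ℝ}
    (hm : ∀ s, m (s + 1) = a * m s + b) : Tendsto m atTop (𝓝 (b / (1 - a))) := by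
  have hfix : a * (b / (1 - a)) + b = b / (1 - a) := by
    have : 1 - a ≠ 0 := by linarith [le_abs_self a]
    field_simp
    ring
  set L := b / (1 - a)
  have hclosed : ∀ s, m s = a ^ s * (m 0 - L) + L := by
    intro s
    induction s with
    | zero => simp
    | succ s ih => rw [hm, ih, pow_succ]; linear_combination hfix
  rw [funext hclosed]
  simpa using ((tendsto_pow_atTop_nhds_zero_of_abs_lt_one ha).mul_const (m 0 - L)).add_const L

theorem tendsto_setIntegral_Ioi_atTop {g : ℝ → ℝ} {a : ℝ} (hg : IntegrableOn g (Ioi a)) :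
    Tendsto (fun T => ∫ y in Ioi T, g y) atTop (𝓝 0) := by
  have hlim := (intervalIntegral_tendsto_integral_Ioi a hg tendsto_id).const_sub
    (∫ y in Ioi a, g y)
  rw [sub_self] at hlim
  refine hlim.congr' ?_
  filter_upwards [eventually_ge_atTop a] with T hT
  rw [id, ← intervalIntegral.integral_Ioi_sub_Ioi hg hT, sub_sub_cancel]

noncomputable def survival (f : ℝ → ℝ) (τ : ℝ) : ℝ := 1 - ∫ y in (0 : ℝ)..τ, f y

section Survival

variable {f : ℝ → ℝ}

theorem hasDerivAt_survival (hf : Continuous f) (x : ℝ) : HasDerivAt (survival f) (-f x) x :=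
  (hf.integral_hasStrictDerivAt 0 x).hasDerivAt.const_sub 1

theorem survival_eq_setIntegral_Ioi (hf_prob : ∫ τ in Ioi (0 : ℝ), f τ = 1) {T : ℝ}
    (hT : 0 ≤ T) : survival f T = ∫ y in Ioi T, f y := by
  have hf_int : IntegrableOn f (Ioi 0) := Integrable.of_integral_ne_zero (by simp [hf_prob])
  rw [survival, ← hf_prob, ← intervalIntegral.integral_Ioi_sub_Ioi hf_int hT, sub_sub_cancel]

theorem survival_nonneg (hf_nonneg : ∀ τ, 0 < τ → 0 ≤ f τ)
    (hf_prob : ∫ τ in Ioi (0 : ℝ), f τ = 1) {T : ℝ} (hT : 0 ≤ T) : 0 ≤ survival f T := by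
  rw [survival_eq_setIntegral_Ioi hf_prob hT]
  exact setIntegral_nonneg measurableSet_Ioi fun τ hτ => hf_nonneg τ (hT.trans_lt hτ)

theorem tendsto_survival_atTop (hf_prob : ∫ τ in Ioi (0 : ℝ), f τ = 1) :
    Tendsto (survival f) atTop (𝓝 0) := by
  have hf_int : IntegrableOn f (Ioi 0) := Integrable.of_integral_ne_zero (by simp [hf_prob])
  refine (tendsto_setIntegral_Ioi_atTop hf_int).congr' ?_
  filter_upwards [eventually_ge_atTop 0] with T hT
  exact (survival_eq_setIntegral_Ioi hf_prob hT).symm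

theorem tendsto_mul_survival_atTop (hf_nonneg : ∀ τ, 0 < τ → 0 ≤ f τ)
    (hf_prob : ∫ τ in Ioi (0 : ℝ), f τ = 1)
    (hf_mean : IntegrableOn (fun τ => τ * f τ) (Ioi 0)) :
    Tendsto (fun T => T * survival f T) atTop (𝓝 0) := by
  have hf_int : IntegrableOn f (Ioi 0) := Integrable.of_integral_ne_zero (by simp [hf_prob])
  refine squeeze_zero' ?_ ?_ (tendsto_setIntegral_Ioi_atTop hf_mean)
  · filter_upwards [eventually_ge_atTop 0] with T hT
    exact mul_nonneg hT (survival_nonneg hf_nonneg hf_prob hT)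
  · filter_upwards [eventually_ge_atTop 0] with T hT
    rw [survival_eq_setIntegral_Ioi hf_prob hT, ← integral_const_mul]
    refine setIntegral_mono_on ((hf_int.mono_set (Ioi_subset_Ioi hT)).const_mul T)
      (hf_mean.mono_set (Ioi_subset_Ioi hT)) measurableSet_Ioi fun y hy => ?_
    exact mul_le_mul_of_nonneg_right hy.le (hf_nonneg y (hT.trans_lt hy))

theorem hasDerivAt_mul_survival_add_integral (hf : Continuous f) (x : ℝ) :
    HasDerivAt (fun τ => τ * survival f τ + ∫ y in (0 : ℝ)..τ, y * f y) (survival f x) x := by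
  have hmean : Continuous fun y => y * f y := continuous_id.mul hf
  refine (((hasDerivAt_id' x).mul (hasDerivAt_survival hf x)).add
    (hmean.integral_hasStrictDerivAt 0 x).hasDerivAt).congr_deriv ?_
  ring

theorem integral_survival (hf_cont : Continuous f) (hf_nonneg : ∀ τ, 0 < τ → 0 ≤ f τ)
    (hf_prob : ∫ τ in Ioi (0 : ℝ), f τ = 1)
    (hf_mean : IntegrableOn (fun τ => τ * f τ) (Ioi 0)) :
    IntegrableOn (survival f) (Ioi 0) ∧
      ∫ τ in Ioi (0 : ℝ), survival f τ = ∫ τ in Ioi (0 : ℝ), τ * f τ := by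
  have hderiv := fun x (_ : x ∈ Ici (0 : ℝ)) => hasDerivAt_mul_survival_add_integral hf_cont x
  have hpos := fun x (hx : x ∈ Ioi (0 : ℝ)) => survival_nonneg hf_nonneg hf_prob hx.out.le
  have hlim : Tendsto (fun τ => τ * survival f τ + ∫ y in (0 : ℝ)..τ, y * f y) atTop
      (𝓝 (∫ τ in Ioi (0 : ℝ), τ * f τ)) := by
    simpa using (tendsto_mul_survival_atTop hf_nonneg hf_prob hf_mean).add
      (intervalIntegral_tendsto_integral_Ioi 0 hf_mean tendsto_id)
  refine ⟨integrableOn_Ioi_deriv_of_nonneg' hderiv hpos hlim, ?_⟩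
  rw [integral_Ioi_of_hasDerivAt_of_nonneg' hderiv hpos hlim]
  simp

theorem integrableOn_mul_exp_neg (hf_int : IntegrableOn f (Ioi 0)) {γ : ℝ} (hγ : 0 ≤ γ) :
    IntegrableOn (fun τ => f τ * Real.exp (-γ * τ)) (Ioi 0) := by
  have hexp : Continuous fun τ => Real.exp (-γ * τ) := by fun_prop
  refine Integrable.mono hf_int (hf_int.aestronglyMeasurable.mul hexp.aestronglyMeasurable) ?_
  filter_upwards [ae_restrict_mem measurableSet_Ioi] with τ hτ
  rw [norm_mul, Real.norm_of_nonneg (Real.exp_pos _).le]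
  refine mul_le_of_le_one_right (norm_nonneg _) (Real.exp_le_one_iff.2 ?_)
  nlinarith [hτ.out]

theorem hasDerivAt_survival_mul_exp_antideriv (hf : Continuous f) {γ : ℝ} (hγ : γ ≠ 0)
    (x : ℝ) :
    HasDerivAt (fun τ => (1 - survival f τ * Real.exp (-γ * τ)
        - ∫ y in (0 : ℝ)..τ, f y * Real.exp (-γ * y)) / γ)
      (survival f x * Real.exp (-γ * x)) x := by
  have hexp : HasDerivAt (fun τ => Real.exp (-γ * τ)) (Real.exp (-γ * x) * -γ) x := by
    simpa using ((hasDerivAt_id' x).const_mul (-γ)).exp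
  have hlaplace : Continuous fun y => f y * Real.exp (-γ * y) := by fun_prop
  refine ((((hasDerivAt_survival hf x).mul hexp).const_sub 1).sub
    (hlaplace.integral_hasStrictDerivAt 0 x).hasDerivAt).div_const γ |>.congr_deriv ?_
  field_simp
  ring

theorem integral_survival_mul_exp_neg (hf_cont : Continuous f)
    (hf_nonneg : ∀ τ, 0 < τ → 0 ≤ f τ) (hf_prob : ∫ τ in Ioi (0 : ℝ), f τ = 1)
    {γ : ℝ} (hγ : 0 < γ) :
    IntegrableOn (fun τ => survival f τ * Real.exp (-γ * τ)) (Ioi 0) ∧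
      ∫ τ in Ioi (0 : ℝ), survival f τ * Real.exp (-γ * τ) =
        (1 - ∫ τ in Ioi (0 : ℝ), f τ * Real.exp (-γ * τ)) / γ := by
  have hf_int : IntegrableOn f (Ioi 0) := Integrable.of_integral_ne_zero (by simp [hf_prob])
  have hderiv := fun x (_ : x ∈ Ici (0 : ℝ)) =>
    hasDerivAt_survival_mul_exp_antideriv hf_cont hγ.ne' x
  have hpos := fun x (hx : x ∈ Ioi (0 : ℝ)) =>
    mul_nonneg (survival_nonneg hf_nonneg hf_prob hx.out.le) (Real.exp_pos (-γ * x)).le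
  have hexp : Tendsto (fun τ => Real.exp (-γ * τ)) atTop (𝓝 0) :=
    Real.tendsto_exp_atBot.comp (tendsto_id.const_mul_atTop_of_neg (neg_lt_zero.2 hγ))
  have hlim : Tendsto (fun τ => (1 - survival f τ * Real.exp (-γ * τ)
        - ∫ y in (0 : ℝ)..τ, f y * Real.exp (-γ * y)) / γ) atTop
      (𝓝 ((1 - ∫ τ in Ioi (0 : ℝ), f τ * Real.exp (-γ * τ)) / γ)) := by
    simpa using ((tendsto_const_nhds.sub ((tendsto_survival_atTop hf_prob).mul hexp)).sub
      (intervalIntegral_tendsto_integral_Ioi 0 (integrableOn_mul_exp_neg hf_int hγ.le)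
        tendsto_id)).div_const γ
  refine ⟨integrableOn_Ioi_deriv_of_nonneg' hderiv hpos hlim, ?_⟩
  rw [integral_Ioi_of_hasDerivAt_of_nonneg' hderiv hpos hlim]
  simp [survival]

theorem setIntegral_mul_exp_neg_mem_Icc (hf_nonneg : ∀ τ, 0 < τ → 0 ≤ f τ)
    (hf_prob : ∫ τ in Ioi (0 : ℝ), f τ = 1) {γ : ℝ} (hγ : 0 ≤ γ) :
    ∫ τ in Ioi (0 : ℝ), f τ * Real.exp (-γ * τ) ∈ Icc 0 1 := by
  have hf_int : IntegrableOn f (Ioi 0) := Integrable.of_integral_ne_zero (by simp [hf_prob])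
  constructor
  · exact setIntegral_nonneg measurableSet_Ioi fun τ hτ =>
      mul_nonneg (hf_nonneg τ hτ) (Real.exp_pos _).le
  · rw [← hf_prob]
    refine setIntegral_mono_on (integrableOn_mul_exp_neg hf_int hγ) hf_int measurableSet_Ioi
      fun τ hτ => mul_le_of_le_one_right (hf_nonneg τ hτ) (Real.exp_le_one_iff.2 ?_)
    nlinarith [hτ.out]

theorem integral_survival_mul_relaxation (hf_cont : Continuous f)
    (hf_nonneg : ∀ τ, 0 < τ → 0 ≤ f τ) (hf_prob : ∫ τ in Ioi (0 : ℝ), f τ = 1)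
    (hf_mean : IntegrableOn (fun τ => τ * f τ) (Ioi 0)) {γ : ℝ} (hγ : 0 < γ) (L c : ℝ) :
    ∫ τ in Ioi (0 : ℝ), survival f τ * (Real.exp (-γ * τ) * L + c * (1 - Real.exp (-γ * τ))) =
      c * (∫ τ in Ioi (0 : ℝ), τ * f τ) +
        (L - c) * ((1 - ∫ τ in Ioi (0 : ℝ), f τ * Real.exp (-γ * τ)) / γ) := by
  obtain ⟨hS_int, hS⟩ := integral_survival hf_cont hf_nonneg hf_prob hf_mean
  obtain ⟨hSe_int, hSe⟩ := integral_survival_mul_exp_neg hf_cont hf_nonneg hf_prob hγ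
  calc ∫ τ in Ioi (0 : ℝ), survival f τ * (Real.exp (-γ * τ) * L + c * (1 - Real.exp (-γ * τ)))
      = ∫ τ in Ioi (0 : ℝ), (c * survival f τ + (L - c) * (survival f τ * Real.exp (-γ * τ))) :=
        integral_congr_ae (Eventually.of_forall fun τ => by ring)
    _ = _ := by
        rw [integral_add (hS_int.const_mul _) (hSe_int.const_mul _), integral_const_mul,
          integral_const_mul, hS, hSe]

end Survival

theorem gene_product_mean_general
    (f : ℝ → ℝ) (hf_cont : Continuous f)
    (hf_pos : ∀ τ : ℝ, 0 < τ → 0 < f τ)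
    (hf_prob : ∫ τ in Set.Ioi (0:ℝ), f τ = 1)
    (S : ℝ → ℝ) (hS : ∀ τ : ℝ, S τ = 1 - ∫ y in (0:ℝ)..τ, f y)
    (m₁ : ℝ) (hm₁ : m₁ = ∫ τ in Set.Ioi (0:ℝ), τ * f τ)
    (hm₁_int : IntegrableOn (fun τ : ℝ => τ * f τ) (Set.Ioi 0))
    (hm₁_pos : 0 < m₁)
    (p : ℝ → ℝ) (hp : ∀ τ : ℝ, p τ = S τ / m₁)
    (k γ : ℝ) (hγ : 0 < γ)
    (φ : ℝ) (hφ : φ = ∫ τ in Set.Ioi (0:ℝ), f τ * Real.exp (-γ * τ)) :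
    ∀ m : ℕ → ℝ,
      (∀ s : ℕ, m (s + 1) = (1 / 2) * (φ * m s + (k / γ) * (1 - φ))) →
      ∃ L : ℝ, Tendsto m atTop (nhds L) ∧
        (∫ τ in Set.Ioi (0:ℝ),
            p τ * (Real.exp (-γ * τ) * L + (k / γ) * (1 - Real.exp (-γ * τ)))) =
          k / γ - (k / (2 * γ ^ 2 * m₁)) * ((1 - φ) / (1 - φ / 2)) := by
  intro m hm
  obtain rfl : S = survival f := funext hS
  have hf_nonneg : ∀ τ, 0 < τ → 0 ≤ f τ := fun τ hτ => (hf_pos τ hτ).le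
  obtain ⟨hφ₀, hφ₁⟩ := hφ ▸ setIntegral_mul_exp_neg_mem_Icc hf_nonneg hf_prob hγ.le
  have hcontract : |φ / 2| < 1 := abs_lt.2 ⟨by linarith, by linarith⟩
  have hrec : ∀ s, m (s + 1) = φ / 2 * m s + (k / γ) * (1 - φ) / 2 := fun s => by
    rw [hm]; ring
  refine ⟨_, tendsto_of_affine_recursion hcontract hrec, ?_⟩
  simp only [hp, div_mul_eq_mul_div _ m₁]
  rw [integral_div, integral_survival_mul_relaxation hf_cont hf_nonneg hf_prob hm₁_int hγ,
    ← hm₁, ← hφ]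
  have : 2 - φ ≠ 0 := by linarith
  field_simp
  ring

/-- **Equation (40): mean gene product level for random cell-cycle times.** -/
theorem gene_product_mean
    (f : ℝ → ℝ) (hf_cont : Continuous f)
    (hf_pos : ∀ τ : ℝ, 0 < τ → 0 < f τ) (hf_supp : ∀ τ : ℝ, τ ≤ 0 → f τ = 0)
    (hf_prob : ∫ τ in Set.Ioi (0:ℝ), f τ = 1)
    (S : ℝ → ℝ) (hS : ∀ τ : ℝ, S τ = 1 - ∫ y in (0:ℝ)..τ, f y)
    (m₁ : ℝ) (hm₁ : m₁ = ∫ τ in Set.Ioi (0:ℝ), τ * f τ)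
    (hm₁_int : IntegrableOn (fun τ : ℝ => τ * f τ) (Set.Ioi 0))
    (hm₁_pos : 0 < m₁)
    (p : ℝ → ℝ) (hp : ∀ τ : ℝ, p τ = S τ / m₁)
    (k γ : ℝ) (hk : 0 < k) (hγ : 0 < γ)
    (φ : ℝ) (hφ : φ = ∫ τ in Set.Ioi (0:ℝ), f τ * Real.exp (-γ * τ)) :
    ∀ m : ℕ → ℝ,
      (∀ s : ℕ, m (s + 1) = (1 / 2) * (φ * m s + (k / γ) * (1 - φ))) →
      ∃ L : ℝ, Tendsto m atTop (nhds L) ∧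
        (∫ τ in Set.Ioi (0:ℝ),
            p τ * (Real.exp (-γ * τ) * L + (k / γ) * (1 - Real.exp (-γ * τ)))) =
          k / γ - (k / (2 * γ ^ 2 * m₁)) * ((1 - φ) / (1 - φ / 2)) :=
  gene_product_mean_general f hf_cont hf_pos hf_prob S hS m₁ hm₁ hm₁_int hm₁_pos p hp k γ hγ φ hφ
end

section
/- Let k > 0, set φ(γ) := ∫₀^∞ f(τ)·e^{−γτ} dτ, and assume the second moment m₂ := ∫₀^∞ τ² f(τ)dτ is finite. Then the steady-state mean gene-product level x̄(γ) := k/γ − (k/(2γ²m₁))·(1 − φ(γ))/(1 − φ(γ)/2) satisfies lim_{γ→0⁺} x̄(γ) = (k·m₁/2)·(3 + CV²), where CV² := (m₂ − m₁²)/m₁² is the squared coefficient of variation of the cell-cycle time. (Equation (41): mean level of a stable gene product.) -/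
open MeasureTheory Filter Topology

/-!
Writing `φ γ = 1 - γ m₁ + γ² D γ`, the mean level is the rational expression
`k (D + m₁² - γ m₁ D) / (m₁ (2 - φ))`, so everything reduces to `D γ → m₂ / 2` as `γ → 0⁺`,
the second-order expansion of the Laplace transform. That is dominated convergence: the
integrand `f τ (e^{-γτ} - 1 + γτ) / γ²` tends to `f τ τ² / 2` and, since `|e^{-x} - 1 + x| ≤ x²`
for `x ≥ 0`, it is dominated by `|τ² f τ|`.
-/

namespace Real

lemma abs_exp_neg_sub_one_add_le_sq {x : ℝ} (hx : 0 ≤ x) : |exp (-x) - 1 + x| ≤ x ^ 2 := by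
  rcases le_total x 1 with hx1 | hx1
  · simpa [sub_neg_eq_add] using abs_exp_sub_one_sub_id_le (x := -x) (by simpa [abs_of_nonneg hx])
  · have hlow := one_sub_le_exp_neg x
    have hup : exp (-x) ≤ 1 := exp_le_one_iff.mpr (by linarith)
    rw [abs_of_nonneg (by linarith)]
    nlinarith

lemma abs_exp_sub_quadratic_le {x : ℝ} (hx : |x| ≤ 1) :
    |exp x - (1 + x + x ^ 2 / 2)| ≤ |x| ^ 3 := by
  have h := exp_bound hx (n := 3) (by norm_num)
  norm_num [Finset.sum_range_succ, Nat.factorial] at h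
  calc |exp x - (1 + x + x ^ 2 / 2)| ≤ |x| ^ 3 * (2 / 9) := by convert h using 3
    _ ≤ |x| ^ 3 := by nlinarith [pow_nonneg (abs_nonneg x) 3]

lemma tendsto_exp_neg_mul_sub_div_sq (τ : ℝ) :
    Tendsto (fun γ => (exp (-γ * τ) - 1 + γ * τ) / γ ^ 2) (𝓝[≠] 0) (𝓝 (τ ^ 2 / 2)) := by
  have hsmall : ∀ᶠ γ in 𝓝[≠] (0 : ℝ), |-γ * τ| ≤ 1 := by
    have : Tendsto (fun γ : ℝ => -γ * τ) (𝓝 0) (𝓝 0) :=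
      (by fun_prop : Continuous fun γ : ℝ => -γ * τ).tendsto' 0 0 (by simp)
    exact nhdsWithin_le_nhds (this.abs.eventually (ge_mem_nhds (by simp : |(0 : ℝ)| < 1)))
  have hlin : Tendsto (fun γ : ℝ => |γ| * |τ| ^ 3) (𝓝[≠] 0) (𝓝 0) :=
    ((by fun_prop : Continuous fun γ : ℝ => |γ| * |τ| ^ 3).tendsto' 0 0 (by simp)).mono_left
      nhdsWithin_le_nhds
  rw [tendsto_iff_norm_sub_tendsto_zero]
  refine squeeze_zero' (Eventually.of_forall fun _ => norm_nonneg _) ?_ hlin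
  filter_upwards [hsmall, self_mem_nhdsWithin] with γ hγ (hγ0 : γ ≠ 0)
  have hγ2 : (0 : ℝ) < γ ^ 2 := by positivity
  have key : (exp (-γ * τ) - 1 + γ * τ) / γ ^ 2 - τ ^ 2 / 2
      = (exp (-γ * τ) - (1 + -γ * τ + (-γ * τ) ^ 2 / 2)) / γ ^ 2 := by
    field_simp
    ring
  rw [Real.norm_eq_abs, key, abs_div, abs_of_pos hγ2, div_le_iff₀ hγ2]
  calc _ ≤ |-γ * τ| ^ 3 := abs_exp_sub_quadratic_le hγ
    _ = |γ| * |τ| ^ 3 * γ ^ 2 := by rw [abs_mul, abs_neg, ← sq_abs γ]; ring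

end Real

section Moments

variable {μ : Measure ℝ} {g : ℝ → ℝ}

lemma integrable_mul_of_integrable_sq_mul (hg : Integrable g μ)
    (hg₂ : Integrable (fun τ => τ ^ 2 * g τ) μ) : Integrable (fun τ => τ * g τ) μ := by
  refine (hg.norm.add hg₂.norm).mono' (continuous_id.aestronglyMeasurable.mul hg.1)
    (Eventually.of_forall fun τ => ?_)
  have : |τ| ≤ 1 + τ ^ 2 := by nlinarith [sq_abs τ, sq_nonneg (|τ| - 1)]
  simp only [Pi.add_apply, norm_mul, Real.norm_eq_abs, abs_pow, sq_abs]
  nlinarith [abs_nonneg (g τ)]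

lemma integrable_mul_exp_neg_mul (hμ : ∀ᵐ τ ∂μ, 0 ≤ τ) (hg : Integrable g μ) {γ : ℝ}
    (hγ : 0 ≤ γ) : Integrable (fun τ => g τ * Real.exp (-γ * τ)) μ := by
  have hmeas : Continuous fun τ => Real.exp (-γ * τ) := by fun_prop
  refine hg.mono (hg.1.mul hmeas.aestronglyMeasurable) ?_
  filter_upwards [hμ] with τ hτ
  have : Real.exp (-γ * τ) ≤ 1 := Real.exp_le_one_iff.mpr (by nlinarith)
  rw [norm_mul, Real.norm_of_nonneg (Real.exp_pos _).le]
  exact mul_le_of_le_one_right (norm_nonneg _) this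

theorem tendsto_laplace_sub_div_sq (hμ : ∀ᵐ τ ∂μ, 0 ≤ τ) (hg : Integrable g μ)
    (hg₂ : Integrable (fun τ => τ ^ 2 * g τ) μ) :
    Tendsto (fun γ => ((∫ τ, g τ * Real.exp (-γ * τ) ∂μ) - (∫ τ, g τ ∂μ)
        + γ * ∫ τ, τ * g τ ∂μ) / γ ^ 2) (𝓝[>] 0) (𝓝 ((∫ τ, τ ^ 2 * g τ ∂μ) / 2)) := by
  have hg₁ := integrable_mul_of_integrable_sq_mul hg hg₂
  have hDCT : Tendsto (fun γ => ∫ τ, g τ * ((Real.exp (-γ * τ) - 1 + γ * τ) / γ ^ 2) ∂μ)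
      (𝓝[>] 0) (𝓝 (∫ τ, g τ * (τ ^ 2 / 2) ∂μ)) := by
    refine tendsto_integral_filter_of_dominated_convergence (fun τ => ‖τ ^ 2 * g τ‖)
      (Eventually.of_forall fun γ => hg.1.mul (by fun_prop)) ?_ hg₂.norm
      (Eventually.of_forall fun τ => ((Real.tendsto_exp_neg_mul_sub_div_sq τ).mono_left
        (nhdsWithin_mono _ (by simp))).const_mul (g τ))
    filter_upwards [self_mem_nhdsWithin] with γ (hγ : 0 < γ)
    filter_upwards [hμ] with τ hτ
    have h := Real.abs_exp_neg_sub_one_add_le_sq (mul_nonneg hγ.le hτ)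
    rw [norm_mul, norm_mul, mul_comm]
    gcongr
    rw [Real.norm_eq_abs, Real.norm_eq_abs, abs_div, abs_of_pos (by positivity : (0 : ℝ) < γ ^ 2),
      div_le_iff₀ (by positivity), neg_mul, abs_of_nonneg (sq_nonneg τ)]
    simpa [mul_pow, mul_comm] using h
  have hlimit : ∫ τ, g τ * (τ ^ 2 / 2) ∂μ = (∫ τ, τ ^ 2 * g τ ∂μ) / 2 := by
    rw [← integral_div]
    congr 1 with τ
    ring
  refine (hlimit ▸ hDCT).congr' ?_
  filter_upwards [self_mem_nhdsWithin] with γ (hγ : 0 < γ)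
  have hexp := integrable_mul_exp_neg_mul hμ hg hγ.le
  have hpt : ∀ τ, g τ * ((Real.exp (-γ * τ) - 1 + γ * τ) / γ ^ 2)
      = (g τ * Real.exp (-γ * τ) - g τ + γ * (τ * g τ)) / γ ^ 2 := fun τ => by ring
  simp only [hpt]
  have hdiff : Integrable (fun τ => g τ * Real.exp (-γ * τ) - g τ) μ := hexp.sub hg
  rw [integral_div, integral_add hdiff (hg₁.const_mul γ), integral_sub hexp hg,
    integral_const_mul]

end Moments

lemma mean_level_eq {k m₁ γ p D : ℝ} (hγ : γ ≠ 0) (hm₁ : m₁ ≠ 0) (hp : p ≠ 2)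
    (hD : p = 1 - γ * m₁ + γ ^ 2 * D) :
    k / γ - k / (2 * γ ^ 2 * m₁) * ((1 - p) / (1 - p / 2))
      = k * (D + m₁ ^ 2 - γ * m₁ * D) / (m₁ * (2 - p)) := by
  have h2p : 2 - p ≠ 0 := sub_ne_zero.mpr (Ne.symm hp)
  have h2p' : 1 - p / 2 ≠ 0 := by contrapose! h2p; linarith
  field_simp
  rw [hD]
  ring

theorem tendsto_mean_level {k m₁ m₂ : ℝ} (hm₁ : m₁ ≠ 0) {φ : ℝ → ℝ}
    (hφ : Tendsto (fun γ => (φ γ - 1 + γ * m₁) / γ ^ 2) (𝓝[>] 0) (𝓝 (m₂ / 2))) :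
    Tendsto (fun γ => k / γ - k / (2 * γ ^ 2 * m₁) * ((1 - φ γ) / (1 - φ γ / 2))) (𝓝[>] 0)
      (𝓝 (k * (m₂ / 2 + m₁ ^ 2) / m₁)) := by
  set D := fun γ => (φ γ - 1 + γ * m₁) / γ ^ 2
  have hid : Tendsto (fun γ : ℝ => γ) (𝓝[>] 0) (𝓝 0) := nhdsWithin_le_nhds
  have hφD : ∀ᶠ γ in 𝓝[>] 0, φ γ = 1 - γ * m₁ + γ ^ 2 * D γ := by
    filter_upwards [self_mem_nhdsWithin] with γ (hγ : 0 < γ)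
    simp only [D]
    field_simp
    ring
  have hφ1 : Tendsto φ (𝓝[>] 0) (𝓝 1) := by
    refine Tendsto.congr' (EventuallyEq.symm hφD) ?_
    simpa using (tendsto_const_nhds.sub (hid.mul_const m₁)).add ((hid.pow 2).mul hφ)
  have hlim : Tendsto (fun γ => k * (D γ + m₁ ^ 2 - γ * m₁ * D γ) / (m₁ * (2 - φ γ))) (𝓝[>] 0)
      (𝓝 (k * (m₂ / 2 + m₁ ^ 2) / m₁)) := by
    have h := (((hφ.add_const (m₁ ^ 2)).sub ((hid.mul_const m₁).mul hφ)).const_mul k).div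
      ((tendsto_const_nhds (x := (2 : ℝ)).sub hφ1).const_mul m₁) (by norm_num [hm₁])
    rwa [zero_mul, zero_mul, sub_zero, show (2 : ℝ) - 1 = 1 by norm_num, mul_one] at h
  refine hlim.congr' ?_
  filter_upwards [hφD, self_mem_nhdsWithin, hφ1.eventually_ne (by norm_num : (1 : ℝ) ≠ 2)]
    with γ hγD (hγ : 0 < γ) hγ2
  exact (mean_level_eq hγ.ne' hm₁ hγ2 hγD).symm

theorem gene_product_mean_stable_limit_general
    (f : ℝ → ℝ)
    (hf_prob : ∫ τ in Set.Ioi (0:ℝ), f τ = 1)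
    (m₁ : ℝ) (hm₁ : m₁ = ∫ τ in Set.Ioi (0:ℝ), τ * f τ)
    (hm₁_pos : 0 < m₁)
    (m₂ : ℝ) (hm₂ : m₂ = ∫ τ in Set.Ioi (0:ℝ), τ ^ 2 * f τ)
    (hm₂_int : IntegrableOn (fun τ : ℝ => τ ^ 2 * f τ) (Set.Ioi 0))
    (k : ℝ)
    (φ : ℝ → ℝ) (hφ : ∀ γ : ℝ, φ γ = ∫ τ in Set.Ioi (0:ℝ), f τ * Real.exp (-γ * τ))
    (xbar : ℝ → ℝ)
    (hxbar : ∀ γ : ℝ, xbar γ =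
      k / γ - (k / (2 * γ ^ 2 * m₁)) * ((1 - φ γ) / (1 - φ γ / 2)))
    (CV2 : ℝ) (hCV2 : CV2 = (m₂ - m₁ ^ 2) / m₁ ^ 2) :
    Tendsto xbar (nhdsWithin 0 (Set.Ioi 0)) (nhds ((k * m₁ / 2) * (3 + CV2))) := by
  -- a non-integrable function has Bochner integral `0`, not `1`
  have hf : IntegrableOn f (Set.Ioi 0) := Integrable.of_integral_ne_zero (by simp [hf_prob])
  have hexpansion := tendsto_laplace_sub_div_sq
    ((ae_restrict_mem measurableSet_Ioi).mono fun τ (hτ : 0 < τ) => hτ.le) hf hm₂_int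
  rw [hf_prob, ← hm₁, ← hm₂] at hexpansion
  have hvalue : k * (m₂ / 2 + m₁ ^ 2) / m₁ = k * m₁ / 2 * (3 + CV2) := by
    rw [hCV2]
    field_simp
    ring
  rw [funext hxbar, ← hvalue]
  exact tendsto_mean_level hm₁_pos.ne' (hexpansion.congr fun γ => by rw [hφ])

/-- **Equation (41): mean level of a stable gene product.** -/
theorem gene_product_mean_stable_limit
    (f : ℝ → ℝ) (hf_cont : Continuous f)
    (hf_pos : ∀ τ : ℝ, 0 < τ → 0 < f τ) (hf_supp : ∀ τ : ℝ, τ ≤ 0 → f τ = 0)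
    (hf_prob : ∫ τ in Set.Ioi (0:ℝ), f τ = 1)
    (m₁ : ℝ) (hm₁ : m₁ = ∫ τ in Set.Ioi (0:ℝ), τ * f τ)
    (hm₁_int : IntegrableOn (fun τ : ℝ => τ * f τ) (Set.Ioi 0))
    (hm₁_pos : 0 < m₁)
    (m₂ : ℝ) (hm₂ : m₂ = ∫ τ in Set.Ioi (0:ℝ), τ ^ 2 * f τ)
    (hm₂_int : IntegrableOn (fun τ : ℝ => τ ^ 2 * f τ) (Set.Ioi 0))
    (k : ℝ) (hk : 0 < k)
    (φ : ℝ → ℝ) (hφ : ∀ γ : ℝ, φ γ = ∫ τ in Set.Ioi (0:ℝ), f τ * Real.exp (-γ * τ))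
    (xbar : ℝ → ℝ)
    (hxbar : ∀ γ : ℝ, xbar γ =
      k / γ - (k / (2 * γ ^ 2 * m₁)) * ((1 - φ γ) / (1 - φ γ / 2)))
    (CV2 : ℝ) (hCV2 : CV2 = (m₂ - m₁ ^ 2) / m₁ ^ 2) :
    Tendsto xbar (nhdsWithin 0 (Set.Ioi 0)) (nhds ((k * m₁ / 2) * (3 + CV2))) :=
  gene_product_mean_stable_limit_general f hf_prob m₁ hm₁ hm₁_pos m₂ hm₂ hm₂_int k φ hφ xbar hxbar
    CV2 hCV2
end

section
/- Let k, γ > 0 and b ≥ 0, and set φ₁ := ∫₀^∞ f(τ)e^{−γτ}dτ, φ₂ := ∫₀^∞ f(τ)e^{−2γτ}dτ. Consider the joint recursion modeling the first two moments of a gene product with synthesis rate k, degradation rate γ, halving at division, and binomial-type partitioning noise of magnitude b: m_s = (1/2)[φ₁ m_{s−1} + (k/γ)(1−φ₁)] and q_s = (1/4)[φ₂ q_{s−1} + 2(k/γ)(φ₁−φ₂)m_{s−1} + (k/γ)²(1−2φ₁+φ₂)] + b[φ₁ m_{s−1} + (k/γ)(1−φ₁)]. Then (m_s, q_s) converges for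 every initial value, and the steady-state second moment x̄² := ∫₀^∞ p(τ)·[e^{−2γτ}·q_∞ + 2(k/γ)(e^{−γτ}−e^{−2γτ})·m_∞ + (k/γ)²(1−e^{−γτ})²] dτ (with (m_∞, q_∞) the limit) equals (b·k/(2γ²m₁))·((1−φ₂)/(1−φ₂/4))·((1−φ₁)/(1−φ₁/2)) + k²/γ² + (k²/(16γ³m₁))·(−14 + 17φ₁ + φ₂(2 − 5φ₁))/((1 − φ₂/4)(1 − φ₁/2)). (Equation (48): second moment of gene product level with noisy cell-cycle times and partitioning errors; b = 0 recovers equation (44).) -/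
/-!
The moment recursion is triangular: `m` is an affine contraction with ratio `φ₁ / 2`, and `q` is
an affine contraction with ratio `φ₂ / 4` driven by `m`, so both converge to the fixed point.
For the steady state, `S τ = ∫_τ^∞ f` and the layer-cake formula (Tonelli) turns
`∫ S(τ) g(τ) dτ` into `∫ f(y) G(y) dy` with `G' = g`, `G 0 = 0`; for `g = 1, e^{-γτ}, e^{-2γτ}`
this gives `m₁`, `(1 - φ₁) / γ` and `(1 - φ₂) / (2γ)`, and the closed form is algebra.
-/

open MeasureTheory Filter Set Topology

theorem antitoneOn_integral_Ioi {f : ℝ → ℝ} {a : ℝ} (hf : IntegrableOn f (Ioi a))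
    (hf_nn : ∀ y, a < y → 0 ≤ f y) : AntitoneOn (fun t => ∫ y in Ioi t, f y) (Ici a) := by
  intro s hs t _ hst
  refine setIntegral_mono_set (hf.mono_set (Ioi_subset_Ioi hs)) ?_
    (Ioi_subset_Ioi hst).eventuallyLE
  filter_upwards [ae_restrict_mem measurableSet_Ioi] with y hy
  exact hf_nn y (lt_of_le_of_lt hs hy)

theorem tendsto_zero_of_abs_succ_le {a r C : ℝ} (ha : 0 ≤ a) (ha1 : a < 1) (hr : 0 ≤ r)
    (hr1 : r < 1) (hC : 0 ≤ C) {u : ℕ → ℝ} (hu : ∀ s, |u (s + 1)| ≤ a * |u s| + C * r ^ s) :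
    Tendsto u atTop (𝓝 0) := by
  obtain ⟨ρ, hρ, hρ1⟩ := exists_between (max_lt ha1 hr1)
  have haρ : a < ρ := (le_max_left a r).trans_lt hρ
  have hrρ : r ≤ ρ := (le_max_right a r).trans hρ.le
  set M := |u 0| + C / (ρ - a)
  have hM : a * M + C ≤ M * ρ := by
    have : C = C / (ρ - a) * (ρ - a) := by field_simp [(sub_pos.2 haρ).ne']
    nlinarith [abs_nonneg (u 0)]
  have hρ0 : 0 ≤ ρ := ha.trans haρ.le
  have h_bound : ∀ s, |u s| ≤ M * ρ ^ s := by
    intro s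
    induction s with
    | zero => simp [M, div_nonneg hC (sub_pos.2 haρ).le]
    | succ n ih =>
      have hpow : r ^ n ≤ ρ ^ n := pow_le_pow_left₀ hr hrρ n
      calc |u (n + 1)| ≤ a * (M * ρ ^ n) + C * ρ ^ n := by
            nlinarith [hu n, mul_le_mul_of_nonneg_left hpow hC]
        _ = (a * M + C) * ρ ^ n := by ring
        _ ≤ M * ρ * ρ ^ n := mul_le_mul_of_nonneg_right hM (pow_nonneg hρ0 n)
        _ = M * ρ ^ (n + 1) := by ring
  have h_geom := (tendsto_pow_atTop_nhds_zero_of_lt_one hρ0 hρ1).const_mul M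
  rw [mul_zero] at h_geom
  exact squeeze_zero_norm h_bound h_geom

theorem sub_eq_pow_mul_of_affine_rec {a c L : ℝ} {x : ℕ → ℝ} (hx : ∀ s, x (s + 1) = a * x s + c)
    (hL : a * L + c = L) (s : ℕ) : x s - L = a ^ s * (x 0 - L) := by
  induction s with
  | zero => simp
  | succ n ih => rw [hx n, pow_succ]; linear_combination a * ih + hL

theorem tendsto_of_affine_rec {a c : ℝ} (ha : |a| < 1) {x : ℕ → ℝ}
    (hx : ∀ s, x (s + 1) = a * x s + c) : Tendsto x atTop (𝓝 (c / (1 - a))) := by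
  have h1a : 1 - a ≠ 0 := by linarith [le_abs_self a]
  have hL : a * (c / (1 - a)) + c = c / (1 - a) := by field_simp; ring
  have h := ((tendsto_pow_atTop_nhds_zero_of_abs_lt_one ha).mul_const (x 0 - c / (1 - a))).add_const
    (c / (1 - a))
  rw [zero_mul, zero_add] at h
  refine h.congr fun s => ?_
  rw [← sub_eq_pow_mul_of_affine_rec hx hL s, sub_add_cancel]

theorem tendsto_of_triangular_affine_rec {a c a' d e : ℝ} (ha : |a| < 1) (ha' : |a'| < 1)
    {x y : ℕ → ℝ} (hx : ∀ s, x (s + 1) = a * x s + c)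
    (hy : ∀ s, y (s + 1) = a' * y s + d * x s + e) :
    Tendsto y atTop (𝓝 ((d * (c / (1 - a)) + e) / (1 - a'))) := by
  set L := c / (1 - a)
  set L' := (d * L + e) / (1 - a')
  have h1a : 1 - a ≠ 0 := by linarith [le_abs_self a]
  have h1a' : 1 - a' ≠ 0 := by linarith [le_abs_self a']
  have hL : a * L + c = L := by simp only [L]; field_simp; ring
  have hL' : a' * L' + d * L + e = L' := by simp only [L']; field_simp; ring
  have h_err : ∀ s, |y (s + 1) - L'| ≤ |a'| * |y s - L'| + |d * (x 0 - L)| * |a| ^ s := by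
    intro s
    have : y (s + 1) - L' = a' * (y s - L') + d * (a ^ s * (x 0 - L)) := by
      rw [hy s, ← sub_eq_pow_mul_of_affine_rec hx hL s]
      linear_combination hL'
    rw [this]
    refine (abs_add_le _ _).trans_eq ?_
    rw [abs_mul, abs_mul, abs_mul, abs_mul, abs_pow]
    ring
  have h := (tendsto_zero_of_abs_succ_le (u := fun s => y s - L') (abs_nonneg a') ha'
    (abs_nonneg a) ha (abs_nonneg _) h_err).add_const L'
  rw [zero_add] at h
  exact h.congr fun s => sub_add_cancel _ _

theorem lintegral_tail_mul {f g : ℝ → ℝ} (hf : IntegrableOn f (Ioi 0))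
    (hf_nn : ∀ y, 0 < y → 0 ≤ f y) (hg : Continuous g) (hg_nn : ∀ t, 0 < t → 0 ≤ g t) :
    ∫⁻ t in Ioi 0, ENNReal.ofReal ((∫ y in Ioi t, f y) * g t) =
      ∫⁻ y in Ioi 0, ENNReal.ofReal (f y * ∫ t in 0..y, g t) := by
  set μ : Measure ℝ := (volume.restrict (Ioi 0)).withDensity fun y => ENNReal.ofReal (f y)
  have h_tail : ∀ t, 0 < t → μ (Ioi t) = ENNReal.ofReal (∫ y in Ioi t, f y) := by
    intro t ht
    rw [ofReal_integral_eq_lintegral_ofReal (hf.mono_set (Ioi_subset_Ioi ht.le))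
      (ae_restrict_of_forall_mem measurableSet_Ioi fun y hy => hf_nn y (ht.trans hy)),
      withDensity_apply _ measurableSet_Ioi, Measure.restrict_restrict measurableSet_Ioi,
      inter_eq_left.2 (Ioi_subset_Ioi ht.le)]
  have h_layercake := lintegral_comp_eq_lintegral_meas_lt_mul μ (f := id)
    ((withDensity_absolutelyContinuous _ _).ae_le
      (ae_restrict_of_forall_mem measurableSet_Ioi fun y hy => le_of_lt hy))
    measurable_id.aemeasurable (fun t _ => hg.intervalIntegrable 0 t)
    (ae_restrict_of_forall_mem measurableSet_Ioi hg_nn)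
  simp only [id] at h_layercake
  have hG_cont : Continuous fun y => ∫ t in 0..y, g t :=
    intervalIntegral.continuous_primitive (fun _ _ => hg.intervalIntegrable _ _) 0
  rw [show μ = _ from rfl, lintegral_withDensity_eq_lintegral_mul₀ hf.aemeasurable.ennreal_ofReal
    hG_cont.measurable.ennreal_ofReal.aemeasurable] at h_layercake
  convert h_layercake.symm using 1
  · refine setLIntegral_congr_fun measurableSet_Ioi fun t ht => ?_
    rw [ENNReal.ofReal_mul (setIntegral_nonneg measurableSet_Ioi
      fun y hy => hf_nn y (lt_trans ht hy)), ← h_tail t ht]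
    rfl
  · exact setLIntegral_congr_fun measurableSet_Ioi fun y hy => ENNReal.ofReal_mul (hf_nn y hy)

theorem integrableOn_and_integral_tail_mul {f g : ℝ → ℝ} (hf : IntegrableOn f (Ioi 0))
    (hf_nn : ∀ y, 0 < y → 0 ≤ f y) (hg : Continuous g) (hg_nn : ∀ t, 0 < t → 0 ≤ g t)
    (hfG : IntegrableOn (fun y => f y * ∫ t in 0..y, g t) (Ioi 0)) :
    IntegrableOn (fun t => (∫ y in Ioi t, f y) * g t) (Ioi 0) ∧
      ∫ t in Ioi 0, (∫ y in Ioi t, f y) * g t = ∫ y in Ioi 0, f y * ∫ t in 0..y, g t := by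
  have h_nn_tail : 0 ≤ᵐ[volume.restrict (Ioi 0)] fun t => (∫ y in Ioi t, f y) * g t :=
    ae_restrict_of_forall_mem measurableSet_Ioi fun t ht => mul_nonneg
      (setIntegral_nonneg measurableSet_Ioi fun y hy => hf_nn y (lt_trans ht hy)) (hg_nn t ht)
  have h_nn_primitive : 0 ≤ᵐ[volume.restrict (Ioi 0)] fun y => f y * ∫ t in 0..y, g t :=
    ae_restrict_of_forall_mem measurableSet_Ioi fun y hy => mul_nonneg (hf_nn y hy) <| by
      rw [intervalIntegral.integral_of_le (le_of_lt hy)]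
      exact setIntegral_nonneg measurableSet_Ioc fun t ht => hg_nn t ht.1
  have h_meas : AEStronglyMeasurable (fun t => (∫ y in Ioi t, f y) * g t)
      (volume.restrict (Ioi 0)) :=
    ((aemeasurable_restrict_of_antitoneOn measurableSet_Ioi
      ((antitoneOn_integral_Ioi hf hf_nn).mono Ioi_subset_Ici_self)).mul
      hg.aemeasurable).aestronglyMeasurable
  have h_lintegral := lintegral_tail_mul hf hf_nn hg hg_nn
  refine ⟨⟨h_meas, ?_⟩, ?_⟩
  · rw [hasFiniteIntegral_iff_ofReal h_nn_tail, h_lintegral,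
      ← hasFiniteIntegral_iff_ofReal h_nn_primitive]
    exact hfG.hasFiniteIntegral
  · rw [integral_eq_lintegral_of_nonneg_ae h_nn_tail h_meas,
      integral_eq_lintegral_of_nonneg_ae h_nn_primitive hfG.aestronglyMeasurable, h_lintegral]

theorem intervalIntegral_exp_neg_mul {c : ℝ} (hc : c ≠ 0) (y : ℝ) :
    ∫ t in (0 : ℝ)..y, Real.exp (-c * t) = (1 - Real.exp (-c * y)) / c := by
  rw [intervalIntegral.integral_comp_mul_left (fun t => Real.exp t) (neg_ne_zero.2 hc),
    integral_exp, mul_zero, Real.exp_zero, smul_eq_mul]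
  field_simp
  ring

section Tail

variable {f : ℝ → ℝ} (hf : IntegrableOn f (Ioi 0)) (hf_nn : ∀ y, 0 < y → 0 ≤ f y)
include hf

theorem integrableOn_mul_exp_neg_mul {c : ℝ} (hc : 0 ≤ c) :
    IntegrableOn (fun τ => f τ * Real.exp (-c * τ)) (Ioi 0) :=
  hf.mul_bdd (c := 1) (by fun_prop : Continuous fun τ => Real.exp (-c * τ)).aestronglyMeasurable
    (ae_restrict_of_forall_mem measurableSet_Ioi fun τ hτ => by
      rw [Real.norm_eq_abs, abs_of_pos (Real.exp_pos _), Real.exp_le_one_iff]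
      nlinarith [mem_Ioi.1 hτ])

include hf_nn

theorem integral_mul_exp_neg_mul_mem_Icc {c : ℝ} (hc : 0 ≤ c) :
    ∫ τ in Ioi 0, f τ * Real.exp (-c * τ) ∈ Icc 0 (∫ τ in Ioi 0, f τ) := by
  refine ⟨setIntegral_nonneg measurableSet_Ioi fun τ hτ =>
    mul_nonneg (hf_nn τ hτ) (Real.exp_pos _).le, setIntegral_mono_on
    (integrableOn_mul_exp_neg_mul hf hc) hf measurableSet_Ioi fun τ hτ => ?_⟩
  refine mul_le_of_le_one_right (hf_nn τ hτ) (Real.exp_le_one_iff.2 ?_)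
  nlinarith [mem_Ioi.1 hτ]

theorem integrableOn_and_integral_tail_mul_exp_neg_mul {c : ℝ} (hc : 0 < c) :
    IntegrableOn (fun τ => (∫ y in Ioi τ, f y) * Real.exp (-c * τ)) (Ioi 0) ∧
      ∫ τ in Ioi 0, (∫ y in Ioi τ, f y) * Real.exp (-c * τ) =
        ((∫ y in Ioi 0, f y) - ∫ y in Ioi 0, f y * Real.exp (-c * y)) / c := by
  have hG : (fun y => f y * ∫ t in (0 : ℝ)..y, Real.exp (-c * t)) =
      fun y => (f y - f y * Real.exp (-c * y)) / c := by
    funext y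
    rw [intervalIntegral_exp_neg_mul hc.ne']
    ring
  have hfG : IntegrableOn (fun y => f y * ∫ t in (0 : ℝ)..y, Real.exp (-c * t)) (Ioi 0) := by
    rw [hG]
    exact (hf.sub (integrableOn_mul_exp_neg_mul hf hc.le)).div_const c
  obtain ⟨h_int, h_eq⟩ := integrableOn_and_integral_tail_mul hf hf_nn (by fun_prop)
    (fun t _ => (Real.exp_pos _).le) hfG
  refine ⟨h_int, ?_⟩
  rw [h_eq, hG, integral_div, integral_sub hf (integrableOn_mul_exp_neg_mul hf hc.le)]

theorem integrableOn_and_integral_tail (hm : IntegrableOn (fun τ => τ * f τ) (Ioi 0)) :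
    IntegrableOn (fun τ => ∫ y in Ioi τ, f y) (Ioi 0) ∧
      ∫ τ in Ioi 0, (∫ y in Ioi τ, f y) = ∫ τ in Ioi 0, τ * f τ := by
  have hG : (fun y => f y * ∫ _ in (0 : ℝ)..y, (1 : ℝ)) = fun y => y * f y := by
    funext y
    rw [intervalIntegral.integral_const, smul_eq_mul, mul_one, sub_zero, mul_comm]
  obtain ⟨h_int, h_eq⟩ := integrableOn_and_integral_tail_mul hf hf_nn continuous_const
    (fun _ _ => zero_le_one) (hG ▸ hm)
  simp only [mul_one] at h_int h_eq
  exact ⟨h_int, h_eq.trans (congrArg _ hG)⟩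

theorem integral_tail_mul_exp_combination (hm : IntegrableOn (fun τ => τ * f τ) (Ioi 0))
    {c₁ c₂ : ℝ} (hc₁ : 0 < c₁) (hc₂ : 0 < c₂) (α β δ : ℝ) :
    ∫ τ in Ioi 0, (∫ y in Ioi τ, f y) *
        (α + β * Real.exp (-c₁ * τ) + δ * Real.exp (-c₂ * τ)) =
      α * (∫ τ in Ioi 0, τ * f τ) +
        β * (((∫ y in Ioi 0, f y) - ∫ y in Ioi 0, f y * Real.exp (-c₁ * y)) / c₁) +
        δ * (((∫ y in Ioi 0, f y) - ∫ y in Ioi 0, f y * Real.exp (-c₂ * y)) / c₂) := by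
  obtain ⟨h₀, hv₀⟩ := integrableOn_and_integral_tail hf hf_nn hm
  obtain ⟨h₁, hv₁⟩ := integrableOn_and_integral_tail_mul_exp_neg_mul hf hf_nn hc₁
  obtain ⟨h₂, hv₂⟩ := integrableOn_and_integral_tail_mul_exp_neg_mul hf hf_nn hc₂
  simp_rw [mul_add, mul_left_comm _ β, mul_left_comm _ δ, mul_comm _ α]
  rw [integral_add ?_ (h₂.const_mul δ), integral_add (h₀.const_mul α) (h₁.const_mul β),
    integral_const_mul, integral_const_mul, integral_const_mul, hv₀, hv₁, hv₂]
  exact (h₀.const_mul α).add (h₁.const_mul β)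

end Tail

theorem gene_product_second_moment_general
    (f : ℝ → ℝ)
    (hf_pos : ∀ τ : ℝ, 0 < τ → 0 < f τ)
    (hf_prob : ∫ τ in Set.Ioi (0:ℝ), f τ = 1)
    (S : ℝ → ℝ) (hS : ∀ τ : ℝ, S τ = 1 - ∫ y in (0:ℝ)..τ, f y)
    (m₁ : ℝ) (hm₁ : m₁ = ∫ τ in Set.Ioi (0:ℝ), τ * f τ)
    (hm₁_int : IntegrableOn (fun τ : ℝ => τ * f τ) (Set.Ioi 0))
    (hm₁_pos : 0 < m₁)
    (p : ℝ → ℝ) (hp : ∀ τ : ℝ, p τ = S τ / m₁)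
    (k γ b : ℝ) (hγ : 0 < γ)
    (φ₁ : ℝ) (hφ₁ : φ₁ = ∫ τ in Set.Ioi (0:ℝ), f τ * Real.exp (-γ * τ))
    (φ₂ : ℝ) (hφ₂ : φ₂ = ∫ τ in Set.Ioi (0:ℝ), f τ * Real.exp (-2 * γ * τ)) :
    ∀ m q : ℕ → ℝ,
      (∀ s : ℕ, m (s + 1) = (1 / 2) * (φ₁ * m s + (k / γ) * (1 - φ₁))) →
      (∀ s : ℕ, q (s + 1) =
        (1 / 4) * (φ₂ * q s + 2 * (k / γ) * (φ₁ - φ₂) * m s +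
          (k / γ) ^ 2 * (1 - 2 * φ₁ + φ₂)) +
        b * (φ₁ * m s + (k / γ) * (1 - φ₁))) →
      ∃ mL qL : ℝ, Tendsto m atTop (nhds mL) ∧ Tendsto q atTop (nhds qL) ∧
        (∫ τ in Set.Ioi (0:ℝ),
            p τ * (Real.exp (-2 * γ * τ) * qL +
              2 * (k / γ) * (Real.exp (-γ * τ) - Real.exp (-2 * γ * τ)) * mL +
              (k / γ) ^ 2 * (1 - Real.exp (-γ * τ)) ^ 2)) =
          (b * k / (2 * γ ^ 2 * m₁)) * ((1 - φ₂) / (1 - φ₂ / 4)) * ((1 - φ₁) / (1 - φ₁ / 2)) +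
            k ^ 2 / γ ^ 2 +
            (k ^ 2 / (16 * γ ^ 3 * m₁)) *
              ((-14 + 17 * φ₁ + φ₂ * (2 - 5 * φ₁)) / ((1 - φ₂ / 4) * (1 - φ₁ / 2))) := by
  intro m q hm hq
  have hf_nn : ∀ τ, 0 < τ → 0 ≤ f τ := fun τ hτ => (hf_pos τ hτ).le
  have hf_int : IntegrableOn f (Ioi 0) := Integrable.of_integral_ne_zero (by simp [hf_prob])
  have h2γ : 0 < 2 * γ := by positivity
  -- bring `-2 * γ * τ` into the shape `-c * τ` of the lemmas above
  simp_rw [neg_mul (2 : ℝ)] at hφ₂ ⊢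
  obtain ⟨hφ₁0, hφ₁1⟩ := hf_prob ▸ hφ₁ ▸ integral_mul_exp_neg_mul_mem_Icc hf_int hf_nn hγ.le
  obtain ⟨hφ₂0, hφ₂1⟩ := hf_prob ▸ hφ₂ ▸ integral_mul_exp_neg_mul_mem_Icc hf_int hf_nn h2γ.le
  have h_half : |φ₁ / 2| < 1 := by rw [abs_of_nonneg (by linarith)]; linarith
  have h_quarter : |φ₂ / 4| < 1 := by rw [abs_of_nonneg (by linarith)]; linarith
  have hm' : ∀ s, m (s + 1) = φ₁ / 2 * m s + (k / γ) * (1 - φ₁) / 2 := fun s => by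
    rw [hm s]; ring
  have hm_lim := tendsto_of_affine_rec h_half hm'
  have hq_lim := tendsto_of_triangular_affine_rec h_half h_quarter hm'
    (y := q) (d := (k / γ) * (φ₁ - φ₂) / 2 + b * φ₁)
    (e := (k / γ) ^ 2 * (1 - 2 * φ₁ + φ₂) / 4 + b * (k / γ) * (1 - φ₁)) fun s => by
      rw [hq s]; ring
  refine ⟨_, _, hm_lim, hq_lim, ?_⟩
  set mL := k / γ * (1 - φ₁) / 2 / (1 - φ₁ / 2)
  set qL := ((k / γ * (φ₁ - φ₂) / 2 + b * φ₁) * mL +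
    ((k / γ) ^ 2 * (1 - 2 * φ₁ + φ₂) / 4 + b * (k / γ) * (1 - φ₁))) / (1 - φ₂ / 4)
  have hS_tail : ∀ τ, 0 < τ → S τ = ∫ y in Ioi τ, f y := fun τ hτ => by
    rw [hS, ← hf_prob, ← intervalIntegral.integral_Ioi_sub_Ioi hf_int hτ.le]
    ring
  have h_exp_sq : ∀ τ, Real.exp (-(2 * γ) * τ) = Real.exp (-γ * τ) ^ 2 := fun τ => by
    rw [← Real.exp_nat_mul]
    ring_nf
  calc _ = (∫ τ in Ioi 0, (∫ y in Ioi τ, f y) * ((k / γ) ^ 2 +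
          (2 * (k / γ) * mL - 2 * (k / γ) ^ 2) * Real.exp (-γ * τ) +
          (qL - 2 * (k / γ) * mL + (k / γ) ^ 2) * Real.exp (-(2 * γ) * τ))) / m₁ := by
        rw [← integral_div]
        refine setIntegral_congr_fun measurableSet_Ioi fun τ hτ => ?_
        rw [hp, hS_tail τ hτ, h_exp_sq]
        ring
    _ = _ := by
        rw [integral_tail_mul_exp_combination hf_int hf_nn hm₁_int hγ h2γ, ← hφ₁, ← hφ₂, ← hm₁,
          hf_prob]
        have : 2 - φ₁ ≠ 0 := by linarith
        have : 4 - φ₂ ≠ 0 := by linarith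
        simp only [mL, qL]
        field_simp [hγ.ne', hm₁_pos.ne']
        ring

/-- **Equation (48): second moment of the gene product level with noisy cell-cycle times and
partitioning errors** (`b = 0` recovers equation (44)). -/
theorem gene_product_second_moment
    (f : ℝ → ℝ) (hf_cont : Continuous f)
    (hf_pos : ∀ τ : ℝ, 0 < τ → 0 < f τ) (hf_supp : ∀ τ : ℝ, τ ≤ 0 → f τ = 0)
    (hf_prob : ∫ τ in Set.Ioi (0:ℝ), f τ = 1)
    (S : ℝ → ℝ) (hS : ∀ τ : ℝ, S τ = 1 - ∫ y in (0:ℝ)..τ, f y)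
    (m₁ : ℝ) (hm₁ : m₁ = ∫ τ in Set.Ioi (0:ℝ), τ * f τ)
    (hm₁_int : IntegrableOn (fun τ : ℝ => τ * f τ) (Set.Ioi 0))
    (hm₁_pos : 0 < m₁)
    (p : ℝ → ℝ) (hp : ∀ τ : ℝ, p τ = S τ / m₁)
    (k γ b : ℝ) (hk : 0 < k) (hγ : 0 < γ) (hb : 0 ≤ b)
    (φ₁ : ℝ) (hφ₁ : φ₁ = ∫ τ in Set.Ioi (0:ℝ), f τ * Real.exp (-γ * τ))
    (φ₂ : ℝ) (hφ₂ : φ₂ = ∫ τ in Set.Ioi (0:ℝ), f τ * Real.exp (-2 * γ * τ)) :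
    ∀ m q : ℕ → ℝ,
      (∀ s : ℕ, m (s + 1) = (1 / 2) * (φ₁ * m s + (k / γ) * (1 - φ₁))) →
      (∀ s : ℕ, q (s + 1) =
        (1 / 4) * (φ₂ * q s + 2 * (k / γ) * (φ₁ - φ₂) * m s +
          (k / γ) ^ 2 * (1 - 2 * φ₁ + φ₂)) +
        b * (φ₁ * m s + (k / γ) * (1 - φ₁))) →
      ∃ mL qL : ℝ, Tendsto m atTop (nhds mL) ∧ Tendsto q atTop (nhds qL) ∧
        (∫ τ in Set.Ioi (0:ℝ),
            p τ * (Real.exp (-2 * γ * τ) * qL +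
              2 * (k / γ) * (Real.exp (-γ * τ) - Real.exp (-2 * γ * τ)) * mL +
              (k / γ) ^ 2 * (1 - Real.exp (-γ * τ)) ^ 2)) =
          (b * k / (2 * γ ^ 2 * m₁)) * ((1 - φ₂) / (1 - φ₂ / 4)) * ((1 - φ₁) / (1 - φ₁ / 2)) +
            k ^ 2 / γ ^ 2 +
            (k ^ 2 / (16 * γ ^ 3 * m₁)) *
              ((-14 + 17 * φ₁ + φ₂ * (2 - 5 * φ₁)) / ((1 - φ₂ / 4) * (1 - φ₁ / 2))) :=
  gene_product_second_moment_general f hf_pos hf_prob S hS m₁ hm₁ hm₁_int hm₁_pos p hp k γ b hγ φ₁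
    hφ₁ φ₂ hφ₂
end
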